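/- arXiv:1702.00433 — 10 statements merged into one kernel-verified Lean document; each statement's English description precedes it below -/
import Mathlib

section
/- Let V and H be real inner product spaces and T : V → H a real-linear map. Let σ* > 0 and σ ≥ 0 be real numbers, and let e, g ∈ V and r ∈ H satisfy the residual identity ‖e‖_V² + σ‖T e‖_H² = ⟨g, e⟩_V + ⟨r, T e⟩_H together with the embedding inequality σ*‖T e‖_H² ≤ ‖e‖_V². Define Θ = 2σ*/(σ* + σ) and θ = 1/σ* if σ ≤ σ*, and Θ = 1 and θ = 1/σ if σ > σ*. Then ‖e‖_V² + σ‖T e‖_H² ≤ Θ·(‖g‖_V² + θ·‖r‖_H²). -/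
/-!
Testing the residual identity with `e` and applying Cauchy–Schwarz twice (once in `V × H`
with the weight `κ` on the `H` component) gives, for every `κ > 0`,
`M ^ 2 ≤ (‖g‖ ^ 2 + κ⁻¹ ‖r‖ ^ 2) (‖e‖ ^ 2 + κ ‖T e‖ ^ 2)` with `M = ‖e‖ ^ 2 + σ ‖T e‖ ^ 2`.
For `σ > σ*` take `κ = σ`, so the second factor is `M` itself. For `σ ≤ σ*` take `κ = σ*`;
the embedding inequality then bounds the second factor by `2σ* / (σ* + σ) · M`.
-/

section OrderedField

variable {𝕜 : Type*} [Field 𝕜] [LinearOrder 𝕜] [IsStrictOrderedRing 𝕜]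

theorem le_of_sq_le_mul_self {M C : 𝕜} (hC : 0 ≤ C) (h : M ^ 2 ≤ C * M) : M ≤ C := by
  rcases le_or_gt M 0 with hM | hM
  · exact hM.trans hC
  · exact le_of_mul_le_mul_right (by rwa [sq] at h) hM

theorem mul_add_mul_sq_le_weighted {a b x y κ : 𝕜} (hκ : 0 < κ) :
    (a * x + b * y) ^ 2 ≤ (a ^ 2 + 1 / κ * b ^ 2) * (x ^ 2 + κ * y ^ 2) := by
  have hgap : (a ^ 2 + 1 / κ * b ^ 2) * (x ^ 2 + κ * y ^ 2) - (a * x + b * y) ^ 2 =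
      (κ * a * y - b * x) ^ 2 / κ := by
    field_simp
    ring
  nlinarith [div_nonneg (sq_nonneg (κ * a * y - b * x)) hκ.le]

theorem add_mul_le_of_mul_le_of_le {x y σ σs : 𝕜} (hemb : σs * y ≤ x) (hσ : σ ≤ σs)
    (hpos : 0 < σs + σ) : x + σs * y ≤ 2 * σs / (σs + σ) * (x + σ * y) := by
  rw [div_mul_eq_mul_div, le_div_iff₀ hpos]
  nlinarith [mul_le_mul_of_nonneg_left hemb (sub_nonneg.2 hσ)]

end OrderedField

section InnerProductSpace

variable {V H : Type*} [NormedAddCommGroup V] [InnerProductSpace ℝ V]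
  [NormedAddCommGroup H] [InnerProductSpace ℝ H] {T : V →ₗ[ℝ] H} {σ : ℝ} {e g : V} {r : H}

theorem sq_energy_le_of_residual (hσ : 0 ≤ σ)
    (hres : ‖e‖ ^ 2 + σ * ‖T e‖ ^ 2 = inner ℝ g e + inner ℝ r (T e)) {κ : ℝ} (hκ : 0 < κ) :
    (‖e‖ ^ 2 + σ * ‖T e‖ ^ 2) ^ 2 ≤
      (‖g‖ ^ 2 + 1 / κ * ‖r‖ ^ 2) * (‖e‖ ^ 2 + κ * ‖T e‖ ^ 2) := by
  have hcs : ‖e‖ ^ 2 + σ * ‖T e‖ ^ 2 ≤ ‖g‖ * ‖e‖ + ‖r‖ * ‖T e‖ :=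
    hres ▸ add_le_add (real_inner_le_norm g e) (real_inner_le_norm r (T e))
  calc (‖e‖ ^ 2 + σ * ‖T e‖ ^ 2) ^ 2 ≤ (‖g‖ * ‖e‖ + ‖r‖ * ‖T e‖) ^ 2 := by gcongr
    _ ≤ _ := mul_add_mul_sq_le_weighted hκ

theorem energy_le_of_residual_of_le {σs : ℝ} (hσs : 0 < σs) (hσ : 0 ≤ σ) (hσσs : σ ≤ σs)
    (hres : ‖e‖ ^ 2 + σ * ‖T e‖ ^ 2 = inner ℝ g e + inner ℝ r (T e))
    (hemb : σs * ‖T e‖ ^ 2 ≤ ‖e‖ ^ 2) :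
    ‖e‖ ^ 2 + σ * ‖T e‖ ^ 2 ≤ 2 * σs / (σs + σ) * (‖g‖ ^ 2 + 1 / σs * ‖r‖ ^ 2) := by
  have hpos : 0 < σs + σ := by linarith
  refine le_of_sq_le_mul_self (by positivity) ?_
  calc (‖e‖ ^ 2 + σ * ‖T e‖ ^ 2) ^ 2
      ≤ (‖g‖ ^ 2 + 1 / σs * ‖r‖ ^ 2) * (‖e‖ ^ 2 + σs * ‖T e‖ ^ 2) :=
        sq_energy_le_of_residual hσ hres hσs
    _ ≤ (‖g‖ ^ 2 + 1 / σs * ‖r‖ ^ 2) * (2 * σs / (σs + σ) * (‖e‖ ^ 2 + σ * ‖T e‖ ^ 2)) := by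
        gcongr
        exact add_mul_le_of_mul_le_of_le hemb hσσs hpos
    _ = _ := by ring

theorem energy_le_of_residual_of_pos (hσ : 0 < σ)
    (hres : ‖e‖ ^ 2 + σ * ‖T e‖ ^ 2 = inner ℝ g e + inner ℝ r (T e)) :
    ‖e‖ ^ 2 + σ * ‖T e‖ ^ 2 ≤ ‖g‖ ^ 2 + 1 / σ * ‖r‖ ^ 2 :=
  le_of_sq_le_mul_self (by positivity) (sq_energy_le_of_residual hσ.le hres hσ)

end InnerProductSpace

/-- Abstract Hilbert-space form of the paper's main a posteriori error majorant
(Theorem 2), valid for every reaction coefficient `σ ≥ 0`. -/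
theorem robust_majorant_abstract
    {V H : Type*} [NormedAddCommGroup V] [InnerProductSpace ℝ V]
    [NormedAddCommGroup H] [InnerProductSpace ℝ H]
    (T : V →ₗ[ℝ] H) (σs σ : ℝ) (hσs : 0 < σs) (hσ : 0 ≤ σ)
    (e g : V) (r : H)
    (hres : ‖e‖ ^ 2 + σ * ‖T e‖ ^ 2 = (inner ℝ g e : ℝ) + (inner ℝ r (T e) : ℝ))
    (hemb : σs * ‖T e‖ ^ 2 ≤ ‖e‖ ^ 2) :
    ‖e‖ ^ 2 + σ * ‖T e‖ ^ 2 ≤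
      (if σ ≤ σs then 2 * σs / (σs + σ) else 1) *
        (‖g‖ ^ 2 + (if σ ≤ σs then 1 / σs else 1 / σ) * ‖r‖ ^ 2) := by
  split_ifs with hσσs
  · exact energy_le_of_residual_of_le hσs hσ hσσs hres hemb
  · rw [one_mul]
    exact energy_le_of_residual_of_pos (hσs.trans (not_le.mp hσσs)) hres
end

section
/- Let V and H be real inner product spaces and T : V → H a real-linear map. Let σ* > 0 and σ be real numbers with 0 ≤ σ ≤ σ*, and let e, g ∈ V and r ∈ H satisfy ‖e‖_V² + σ‖T e‖_H² = ⟨g, e⟩_V + ⟨r, T e⟩_H and σ*‖T e‖_H² ≤ ‖e‖_V². Then ‖e‖_V² + σ‖T e‖_H² ≤ (2σ*/(σ* + σ))·(‖g‖_V² + (1/σ*)·‖r‖_H²). -/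
/-!
Cauchy–Schwarz turns the residual identity into `M ≤ ‖g‖‖e‖ + ‖r‖‖T e‖` for the energy
`M = ‖e‖² + σ‖T e‖²`, and a weighted Cauchy–Schwarz bounds the square of the right side by
`(‖g‖² + ‖r‖²/σ*) S` with `S = ‖e‖² + σ*‖T e‖²`. Since `σ ≤ σ*` and `σ*‖T e‖² ≤ ‖e‖²`,
`(σ* - σ)(‖e‖² - σ*‖T e‖²) ≥ 0`, i.e. `S ≤ (2σ*/(σ* + σ)) M`; so
`M² ≤ (‖g‖² + ‖r‖²/σ*) (2σ*/(σ* + σ)) M`, and dividing by `M` gives the majorant.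
-/

lemma mul_add_mul_sq_le_weighted_s1 {w : ℝ} (hw : 0 < w) (x₁ x₂ y₁ y₂ : ℝ) :
    (x₁ * y₁ + x₂ * y₂) ^ 2 ≤ (x₁ ^ 2 + 1 / w * x₂ ^ 2) * (y₁ ^ 2 + w * y₂ ^ 2) := by
  have hdefect : (x₁ ^ 2 + 1 / w * x₂ ^ 2) * (y₁ ^ 2 + w * y₂ ^ 2) - (x₁ * y₁ + x₂ * y₂) ^ 2
      = (w * x₁ * y₂ - x₂ * y₁) ^ 2 / w := by
    field_simp
    ring
  have : 0 ≤ (w * x₁ * y₂ - x₂ * y₁) ^ 2 / w := by positivity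
  linarith

lemma add_mul_sq_le_div_mul_add_mul_sq {σs σ a t : ℝ} (hσs : 0 < σs) (hσ0 : 0 ≤ σ)
    (hσ : σ ≤ σs) (hemb : σs * t ^ 2 ≤ a ^ 2) :
    a ^ 2 + σs * t ^ 2 ≤ 2 * σs / (σs + σ) * (a ^ 2 + σ * t ^ 2) := by
  rw [div_mul_eq_mul_div, le_div_iff₀ (by positivity)]
  nlinarith [mul_nonneg (sub_nonneg.2 hσ) (sub_nonneg.2 hemb)]

lemma le_mul_of_sq_le_mul_of_le_mul {M K S L : ℝ} (hK : 0 ≤ K) (hL : 0 ≤ L)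
    (hMS : M ^ 2 ≤ K * S) (hSM : S ≤ L * M) : M ≤ L * K := by
  rcases le_or_gt M 0 with hM | hM
  · nlinarith
  · nlinarith [mul_le_mul_of_nonneg_left hSM hK]

lemma sq_norm_add_mul_sq_norm_le_of_eq_inner {V H : Type*} [NormedAddCommGroup V]
    [InnerProductSpace ℝ V] [NormedAddCommGroup H] [InnerProductSpace ℝ H]
    {σ : ℝ} {e g : V} {h r : H}
    (hres : ‖e‖ ^ 2 + σ * ‖h‖ ^ 2 = (inner ℝ g e : ℝ) + (inner ℝ r h : ℝ)) :
    ‖e‖ ^ 2 + σ * ‖h‖ ^ 2 ≤ ‖g‖ * ‖e‖ + ‖r‖ * ‖h‖ := by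
  rw [hres]
  exact add_le_add (real_inner_le_norm g e) (real_inner_le_norm r h)

/-- Small-reaction-coefficient case (`σ ≤ σ*`) of the paper's main a posteriori
error majorant (Theorem 2), in abstract Hilbert-space form. -/
theorem majorant_small_sigma_abstract
    {V H : Type*} [NormedAddCommGroup V] [InnerProductSpace ℝ V]
    [NormedAddCommGroup H] [InnerProductSpace ℝ H]
    (T : V →ₗ[ℝ] H) (σs σ : ℝ) (hσs : 0 < σs) (hσ0 : 0 ≤ σ) (hσ : σ ≤ σs)
    (e g : V) (r : H)
    (hres : ‖e‖ ^ 2 + σ * ‖T e‖ ^ 2 = (inner ℝ g e : ℝ) + (inner ℝ r (T e) : ℝ))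
    (hemb : σs * ‖T e‖ ^ 2 ≤ ‖e‖ ^ 2) :
    ‖e‖ ^ 2 + σ * ‖T e‖ ^ 2 ≤
      (2 * σs / (σs + σ)) * (‖g‖ ^ 2 + (1 / σs) * ‖r‖ ^ 2) := by
  have hM_nonneg : 0 ≤ ‖e‖ ^ 2 + σ * ‖T e‖ ^ 2 := by positivity
  have hM_sq : (‖e‖ ^ 2 + σ * ‖T e‖ ^ 2) ^ 2 ≤
      (‖g‖ ^ 2 + 1 / σs * ‖r‖ ^ 2) * (‖e‖ ^ 2 + σs * ‖T e‖ ^ 2) :=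
    (pow_le_pow_left₀ hM_nonneg (sq_norm_add_mul_sq_norm_le_of_eq_inner hres) 2).trans
      (mul_add_mul_sq_le_weighted_s1 hσs _ _ _ _)
  exact le_mul_of_sq_le_mul_of_le_mul (by positivity) (by positivity) hM_sq
    (add_mul_sq_le_div_mul_add_mul_sq hσs hσ0 hσ hemb)
end

section
/- Let V and H be real inner product spaces and T : V → H a real-linear map. Let σ > 0 be a real number, and let e, g ∈ V and r ∈ H satisfy the identity ‖e‖_V² + σ‖T e‖_H² = ⟨g, e⟩_V + ⟨r, T e⟩_H. Then ‖e‖_V² + σ‖T e‖_H² ≤ ‖g‖_V² + (1/σ)·‖r‖_H². -/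
/-! Bound each inner product on the right of the energy identity by a weighted Young
inequality, with weight `1` for `⟨g, e⟩` and weight `σ` for `⟨r, T e⟩`. The energy
`‖e‖² + σ‖T e‖²` then reappears with coefficient `1/2` on the right-hand side and can be
absorbed into the left. -/

open scoped RealInnerProductSpace

theorem real_inner_le_weighted_norm_sq {E : Type*} [NormedAddCommGroup E]
    [InnerProductSpace ℝ E] {ε : ℝ} (hε : 0 < ε) (x y : E) :
    ⟪x, y⟫ ≤ (ε⁻¹ * ‖x‖ ^ 2 + ε * ‖y‖ ^ 2) / 2 := by
  have young : 2 * (‖x‖ * ‖y‖) ≤ ε⁻¹ * ‖x‖ ^ 2 + ε * ‖y‖ ^ 2 := by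
    have h := mul_nonneg (inv_nonneg.mpr hε.le) (sq_nonneg (‖x‖ - ε * ‖y‖))
    have hεε : ε⁻¹ * ε = 1 := inv_mul_cancel₀ hε.ne'
    nlinarith
  linarith [real_inner_le_norm x y]

/-- Abstract Hilbert-space form of Aubin's a posteriori error majorant
(Theorem 1). -/
theorem aubin_majorant_abstract
    {V H : Type*} [NormedAddCommGroup V] [InnerProductSpace ℝ V]
    [NormedAddCommGroup H] [InnerProductSpace ℝ H]
    (T : V →ₗ[ℝ] H) (σ : ℝ) (hσ : 0 < σ)
    (e g : V) (r : H)
    (hres : ‖e‖ ^ 2 + σ * ‖T e‖ ^ 2 = (inner ℝ g e : ℝ) + (inner ℝ r (T e) : ℝ)) :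
    ‖e‖ ^ 2 + σ * ‖T e‖ ^ 2 ≤ ‖g‖ ^ 2 + (1 / σ) * ‖r‖ ^ 2 := by
  have hge := real_inner_le_weighted_norm_sq one_pos g e
  have hrTe := real_inner_le_weighted_norm_sq hσ r (T e)
  rw [one_div]
  linarith
end

section
/- Let f be continuous on [0,1], let σ*, σ be real numbers with σ* > 0 and 0 ≤ σ ≤ σ*. Let u be twice continuously differentiable on [0,1] with −u''(x) + σ·u(x) = f(x) for all x ∈ [0,1] and u(0) = u(1) = 0; let v be continuously differentiable on [0,1] with v(0) = v(1) = 0; let z be continuously differentiable on [0,1]. Assume σ*·∫₀¹(v−u)² dx ≤ ∫₀¹((v−u)')² dx. Then ∫₀¹((v−u)')² dx + σ·∫₀¹(v−u)² dx ≤ (2σ*/(σ*+σ))·( ∫₀¹(v'+z)² dx + (1/σ*)·∫₀¹(f − σ·v − z')² dx ). -/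
open Set intervalIntegral MeasureTheory

/-!
With `e = v - u`, testing the equation with `e` and integrating `z * e` by parts gives the energy
identity `‖e'‖² + σ‖e‖² = ∫ (v' + z) e' - ∫ (f - σ v - z') e`. Cauchy–Schwarz bounds the
right-hand side by `√R₁ ‖e'‖ + √R₂ ‖e‖`, where `R₁ = ‖v' + z‖²` and `R₂ = ‖f - σ v - z'‖²`,
and Cauchy–Schwarz in `ℝ²` with weights `1, σ*` bounds that by
`√(R₁ + R₂ / σ*) · √(‖e'‖² + σ*‖e‖²)`. The Friedrichs-type hypothesis `σ*‖e‖² ≤ ‖e'‖²` together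
with `σ ≤ σ*` gives `‖e'‖² + σ*‖e‖² ≤ 2σ*/(σ* + σ) · (‖e'‖² + σ‖e‖²)`, and the majorant follows.
-/

theorem abs_integral_mul_le_sqrt_mul_sqrt {α : Type*} [MeasurableSpace α] {μ : Measure α}
    {f g : α → ℝ} (hf : Integrable (fun x => f x ^ 2) μ) (hg : Integrable (fun x => g x ^ 2) μ)
    (hfg : Integrable (fun x => f x * g x) μ) :
    |∫ x, f x * g x ∂μ| ≤ √(∫ x, f x ^ 2 ∂μ) * √(∫ x, g x ^ 2 ∂μ) := by
  set A := ∫ x, f x ^ 2 ∂μ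
  set B := ∫ x, g x ^ 2 ∂μ
  set C := ∫ x, f x * g x ∂μ
  have hquad : ∀ t : ℝ, 0 ≤ A * (t * t) + 2 * C * t + B := fun t => by
    have hexp : ∫ x, (t * f x + g x) ^ 2 ∂μ = A * (t * t) + 2 * C * t + B := by
      calc ∫ x, (t * f x + g x) ^ 2 ∂μ
          = ∫ x, (t * t) * f x ^ 2 + (2 * t) * (f x * g x) + g x ^ 2 ∂μ := by
            congr with x; ring
        _ = A * (t * t) + 2 * C * t + B := by
            have hlin : Integrable (fun x => (t * t) * f x ^ 2 + (2 * t) * (f x * g x)) μ :=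
              (hf.const_mul _).add (hfg.const_mul _)
            rw [integral_add hlin hg, integral_add (hf.const_mul _) (hfg.const_mul _),
              MeasureTheory.integral_const_mul, MeasureTheory.integral_const_mul]
            ring
    exact hexp ▸ integral_nonneg fun x => sq_nonneg _
  have hC : C ^ 2 ≤ A * B := by
    have := discrim_le_zero hquad
    rw [discrim] at this
    linarith
  rw [← Real.sqrt_mul (integral_nonneg fun x => sq_nonneg _)]
  exact Real.abs_le_sqrt hC

theorem ContinuousOn.abs_intervalIntegral_mul_le_sqrt_mul_sqrt {a b : ℝ} {f g : ℝ → ℝ}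
    (hab : a ≤ b) (hf : ContinuousOn f (Icc a b)) (hg : ContinuousOn g (Icc a b)) :
    |∫ x in a..b, f x * g x| ≤ √(∫ x in a..b, f x ^ 2) * √(∫ x in a..b, g x ^ 2) := by
  simp only [integral_of_le hab]
  exact abs_integral_mul_le_sqrt_mul_sqrt ((hf.pow 2).intervalIntegrable_of_Icc hab).1
    ((hg.pow 2).intervalIntegrable_of_Icc hab).1 ((hf.mul hg).intervalIntegrable_of_Icc hab).1

theorem integral_deriv_mul_add_mul_deriv_eq_zero {a b : ℝ} {g g' h h' : ℝ → ℝ} (hab : a ≤ b)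
    (hg : ∀ x ∈ Icc a b, HasDerivWithinAt g (g' x) (Icc a b) x)
    (hh : ∀ x ∈ Icc a b, HasDerivWithinAt h (h' x) (Icc a b) x)
    (hg'c : ContinuousOn g' (Icc a b)) (hh'c : ContinuousOn h' (Icc a b))
    (ha : h a = 0) (hb : h b = 0) :
    ∫ x in a..b, g' x * h x + g x * h' x = 0 := by
  rw [← uIcc_of_le hab] at hg hh
  rw [integral_deriv_mul_eq_sub_of_hasDerivWithinAt hg hh (hg'c.intervalIntegrable_of_Icc hab)
    (hh'c.intervalIntegrable_of_Icc hab), ha, hb, mul_zero, mul_zero, sub_zero]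

theorem energy_identity {a b σ : ℝ} {f u u' u'' v v' z z' : ℝ → ℝ} (hab : a ≤ b)
    (hf : ContinuousOn f (Icc a b))
    (hu' : ∀ x ∈ Icc a b, HasDerivWithinAt u (u' x) (Icc a b) x)
    (hu'' : ∀ x ∈ Icc a b, HasDerivWithinAt u' (u'' x) (Icc a b) x)
    (hu''c : ContinuousOn u'' (Icc a b))
    (hode : ∀ x ∈ Icc a b, -u'' x + σ * u x = f x)
    (hua : u a = 0) (hub : u b = 0)
    (hv' : ∀ x ∈ Icc a b, HasDerivWithinAt v (v' x) (Icc a b) x)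
    (hv'c : ContinuousOn v' (Icc a b)) (hva : v a = 0) (hvb : v b = 0)
    (hz' : ∀ x ∈ Icc a b, HasDerivWithinAt z (z' x) (Icc a b) x)
    (hz'c : ContinuousOn z' (Icc a b)) :
    (∫ x in a..b, (v' x - u' x) ^ 2) + σ * ∫ x in a..b, (v x - u x) ^ 2 =
      (∫ x in a..b, (v' x + z x) * (v' x - u' x)) -
        ∫ x in a..b, (f x - σ * v x - z' x) * (v x - u x) := by
  have huc : ContinuousOn u (Icc a b) := fun x hx => (hu' x hx).continuousWithinAt
  have hu'c : ContinuousOn u' (Icc a b) := fun x hx => (hu'' x hx).continuousWithinAt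
  have hvc : ContinuousOn v (Icc a b) := fun x hx => (hv' x hx).continuousWithinAt
  have hzc : ContinuousOn z (Icc a b) := fun x hx => (hz' x hx).continuousWithinAt
  have he : ∀ x ∈ Icc a b, HasDerivWithinAt (fun x => v x - u x) (v' x - u' x) (Icc a b) x :=
    fun x hx => (hv' x hx).sub (hu' x hx)
  have he'c : ContinuousOn (fun x => v' x - u' x) (Icc a b) := hv'c.sub hu'c
  have hweak : ∫ x in a..b, u'' x * (v x - u x) + u' x * (v' x - u' x) = 0 :=
    integral_deriv_mul_add_mul_deriv_eq_zero hab hu'' he hu''c he'c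
      (by rw [hva, hua, sub_zero]) (by rw [hvb, hub, sub_zero])
  have hflux : ∫ x in a..b, z' x * (v x - u x) + z x * (v' x - u' x) = 0 :=
    integral_deriv_mul_add_mul_deriv_eq_zero hab hz' he hz'c he'c
      (by rw [hva, hua, sub_zero]) (by rw [hvb, hub, sub_zero])
  calc (∫ x in a..b, (v' x - u' x) ^ 2) + σ * ∫ x in a..b, (v x - u x) ^ 2
      = ∫ x in a..b, (v' x - u' x) ^ 2 + σ * (v x - u x) ^ 2 +
          (u'' x * (v x - u x) + u' x * (v' x - u' x)) +
          (z' x * (v x - u x) + z x * (v' x - u' x)) := by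
        rw [intervalIntegral.integral_add, intervalIntegral.integral_add,
          intervalIntegral.integral_add, intervalIntegral.integral_const_mul, hweak, hflux]
        · ring
        all_goals exact ContinuousOn.intervalIntegrable_of_Icc hab (by fun_prop)
    _ = ∫ x in a..b, (v' x + z x) * (v' x - u' x) - (f x - σ * v x - z' x) * (v x - u x) := by
        refine integral_congr fun x hx => ?_
        rw [uIcc_of_le hab] at hx
        linear_combination (u x - v x) * hode x hx
    _ = _ := by
        rw [intervalIntegral.integral_sub]
        all_goals exact ContinuousOn.intervalIntegrable_of_Icc hab (by fun_prop)

theorem majorant_of_energy_bound {σs σ D L R₁ R₂ : ℝ} (hσσs : 0 < σs + σ) (hσ : σ ≤ σs)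
    (hL : 0 ≤ L) (hR₁ : 0 ≤ R₁) (hR₂ : 0 ≤ R₂) (hfried : σs * L ≤ D)
    (henergy : D + σ * L ≤ √R₁ * √D + √R₂ * √L) :
    D + σ * L ≤ (2 * σs / (σs + σ)) * (R₁ + (1 / σs) * R₂) := by
  have hσs : 0 < σs := by linarith
  have hσsL : 0 ≤ σs * L := by positivity
  have hD : 0 ≤ D := hσsL.trans hfried
  have hM : 0 ≤ D + σ * L := by nlinarith
  have hR : 0 ≤ R₁ + (1 / σs) * R₂ := by positivity
  have hsplit : √R₂ * √L = √(R₂ / σs) * √(σs * L) := by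
    rw [← Real.sqrt_mul hR₂, ← Real.sqrt_mul (div_nonneg hR₂ hσs.le)]
    field_simp
  have hcs : (D + σ * L) ^ 2 ≤ (R₁ + (1 / σs) * R₂) * (D + σs * L) := by
    rw [hsplit] at henergy
    calc (D + σ * L) ^ 2 ≤ (√R₁ * √D + √(R₂ / σs) * √(σs * L)) ^ 2 :=
          pow_le_pow_left₀ hM henergy 2
      _ ≤ (√R₁ ^ 2 + √(R₂ / σs) ^ 2) * (√D ^ 2 + √(σs * L) ^ 2) := by
          nlinarith [sq_nonneg (√R₁ * √(σs * L) - √(R₂ / σs) * √D)]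
      _ = (R₁ + (1 / σs) * R₂) * (D + σs * L) := by
          rw [Real.sq_sqrt hR₁, Real.sq_sqrt (div_nonneg hR₂ hσs.le), Real.sq_sqrt hD,
            Real.sq_sqrt hσsL]
          ring
  have hfr : (σs + σ) * (D + σs * L) ≤ 2 * σs * (D + σ * L) := by
    nlinarith [mul_nonneg (sub_nonneg.2 hσ) (sub_nonneg.2 hfried)]
  have hquad : (σs + σ) * (D + σ * L) * (D + σ * L) ≤
      2 * σs * (R₁ + (1 / σs) * R₂) * (D + σ * L) := by
    nlinarith [mul_le_mul_of_nonneg_left hcs hσσs.le, mul_le_mul_of_nonneg_left hfr hR]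
  rw [div_mul_eq_mul_div, le_div_iff₀ hσσs, mul_comm]
  rcases hM.eq_or_lt with hM0 | hMpos
  · rw [← hM0, mul_zero]
    positivity
  · exact le_of_mul_le_mul_right hquad hMpos

/-- The paper's main consistent a posteriori error majorant (Theorem 2) for the
one-dimensional reaction–diffusion Dirichlet problem `−u'' + σu = f`,
`u(0) = u(1) = 0`, in the case `0 ≤ σ ≤ σ*`. -/
theorem majorant_1d_small_sigma
    (f u u' u'' v v' z z' : ℝ → ℝ) (σs σ : ℝ)
    (hσs : 0 < σs) (hσ0 : 0 ≤ σ) (hσ : σ ≤ σs)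
    (hf : ContinuousOn f (Icc 0 1))
    (hu' : ∀ x ∈ Icc (0:ℝ) 1, HasDerivWithinAt u (u' x) (Icc 0 1) x)
    (hu'' : ∀ x ∈ Icc (0:ℝ) 1, HasDerivWithinAt u' (u'' x) (Icc 0 1) x)
    (hu''c : ContinuousOn u'' (Icc 0 1))
    (hode : ∀ x ∈ Icc (0:ℝ) 1, -u'' x + σ * u x = f x)
    (hu0 : u 0 = 0) (hu1 : u 1 = 0)
    (hv' : ∀ x ∈ Icc (0:ℝ) 1, HasDerivWithinAt v (v' x) (Icc 0 1) x)
    (hv'c : ContinuousOn v' (Icc 0 1))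
    (hv0 : v 0 = 0) (hv1 : v 1 = 0)
    (hz' : ∀ x ∈ Icc (0:ℝ) 1, HasDerivWithinAt z (z' x) (Icc 0 1) x)
    (hz'c : ContinuousOn z' (Icc 0 1))
    (hfried : σs * ∫ x in (0:ℝ)..1, (v x - u x) ^ 2 ≤
      ∫ x in (0:ℝ)..1, (v' x - u' x) ^ 2) :
    (∫ x in (0:ℝ)..1, (v' x - u' x) ^ 2) +
        σ * ∫ x in (0:ℝ)..1, (v x - u x) ^ 2 ≤
      (2 * σs / (σs + σ)) *
        ((∫ x in (0:ℝ)..1, (v' x + z x) ^ 2) +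
          (1 / σs) * ∫ x in (0:ℝ)..1, (f x - σ * v x - z' x) ^ 2) := by
  have h01 : (0 : ℝ) ≤ 1 := zero_le_one
  have huc : ContinuousOn u (Icc 0 1) := fun x hx => (hu' x hx).continuousWithinAt
  have hu'c : ContinuousOn u' (Icc 0 1) := fun x hx => (hu'' x hx).continuousWithinAt
  have hvc : ContinuousOn v (Icc 0 1) := fun x hx => (hv' x hx).continuousWithinAt
  have hzc : ContinuousOn z (Icc 0 1) := fun x hx => (hz' x hx).continuousWithinAt
  have hcs_flux := ContinuousOn.abs_intervalIntegral_mul_le_sqrt_mul_sqrt h01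
    (f := fun x => v' x + z x) (g := fun x => v' x - u' x) (by fun_prop) (by fun_prop)
  have hcs_residual := ContinuousOn.abs_intervalIntegral_mul_le_sqrt_mul_sqrt h01
    (f := fun x => f x - σ * v x - z' x) (g := fun x => v x - u x) (by fun_prop) (by fun_prop)
  have hsq_nonneg : ∀ g : ℝ → ℝ, 0 ≤ ∫ x in (0 : ℝ)..1, g x ^ 2 := fun g =>
    integral_nonneg h01 fun x _ => sq_nonneg (g x)
  refine majorant_of_energy_bound (by linarith) hσ (hsq_nonneg _) (hsq_nonneg _) (hsq_nonneg _)
    hfried ?_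
  rw [energy_identity h01 hf hu' hu'' hu''c hode hu0 hu1 hv' hv'c hv0 hv1 hz' hz'c]
  linarith [le_abs_self (∫ x in (0 : ℝ)..1, (v' x + z x) * (v' x - u' x)),
    neg_abs_le (∫ x in (0 : ℝ)..1, (f x - σ * v x - z' x) * (v x - u x))]
end

section
/- Let a be continuously differentiable on [0,1] with 0 < μ₁ ≤ a(x) ≤ μ₂ for all x ∈ [0,1], let f be continuous on [0,1], and let σ ≥ 0 and σ* > 0 be real numbers. Let u be twice continuously differentiable on [0,1] with −(a·u')'(x) + σ·u(x) = f(x) on [0,1] and u(0) = u(1) = 0; let v be continuously differentiable on [0,1] with v(0) = v(1) = 0; let z be continuously differentiable on [0,1]. Assume σ*·∫₀¹(v−u)² dx ≤ ∫₀¹ a·((v−u)')² dx. Define Θ = 2σ*/(σ*+σ) and θ = 1/σ* if σ ≤ σ*, and Θ = 1 and θ = 1/σ if σ > σ*. Then ∫₀¹ a·((v−u)')² dx + σ·∫₀¹(v−u)² dx ≤ Θ·( ∫₀¹ a⁻¹·(a·v' + z)² dx + θ·∫₀¹(f − σ·v − z')² dx ). -/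
/-!
Write `e = v - u`. Testing the equation with `e` and integrating by parts against the total flux
`a u' + z` (which is allowed because `e` vanishes at both ends) gives the energy identity
`|||e|||² = ∫ (a v' + z) e' - ∫ (f - σ v - z') e`. With `X = ∫ a e'²`, `Y = ∫ e²`,
`D = ∫ a⁻¹ (a v' + z)²` and `R = ∫ (f - σ v - z')²`, weighted Cauchy–Schwarz bounds the two terms
by `√D √X` and `√R √Y`, and Cauchy–Schwarz in `ℝ²` then gives `|||e|||⁴ ≤ (D + R/κ) (X + κ Y)`
for every `κ > 0`. For `σ ≤ σ*` take `κ = σ*`: the hypothesis `σ* Y ≤ X` gives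
`X + σ* Y ≤ Θ |||e|||²`. For `σ > σ*` take `κ = σ`, so that `X + κ Y = |||e|||²`.
-/

open Set intervalIntegral MeasureTheory

theorem sq_integral_mul_le_integral_inv_mul_sq_mul_integral_mul_sq {α : Type*}
    [MeasurableSpace α] {μ : Measure α} {w p g : α → ℝ} (hw : ∀ᵐ x ∂μ, 0 < w x)
    (hp : Integrable (fun x => (w x)⁻¹ * p x ^ 2) μ) (hpg : Integrable (fun x => p x * g x) μ)
    (hg : Integrable (fun x => w x * g x ^ 2) μ) :
    (∫ x, p x * g x ∂μ) ^ 2 ≤ (∫ x, (w x)⁻¹ * p x ^ 2 ∂μ) * ∫ x, w x * g x ^ 2 ∂μ := by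
  have hquad : ∀ t : ℝ, 0 ≤ (∫ x, w x * g x ^ 2 ∂μ) * (t * t) +
      2 * (∫ x, p x * g x ∂μ) * t + ∫ x, (w x)⁻¹ * p x ^ 2 ∂μ := by
    intro t
    have hexpand : (fun x => (w x)⁻¹ * (p x + t * w x * g x) ^ 2) =ᵐ[μ]
        fun x => t * t * (w x * g x ^ 2) + 2 * t * (p x * g x) + (w x)⁻¹ * p x ^ 2 := by
      filter_upwards [hw] with x hx
      field_simp
      ring
    calc 0 ≤ ∫ x, (w x)⁻¹ * (p x + t * w x * g x) ^ 2 ∂μ :=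
          integral_nonneg_of_ae (by filter_upwards [hw] with x hx; positivity)
      _ = _ := by
        have hsum : Integrable (fun x => t * t * (w x * g x ^ 2) + 2 * t * (p x * g x)) μ :=
          (hg.const_mul _).add (hpg.const_mul _)
        rw [integral_congr_ae hexpand, integral_add hsum hp,
          integral_add (hg.const_mul _) (hpg.const_mul _), MeasureTheory.integral_const_mul,
          MeasureTheory.integral_const_mul]
        ring
  have hdisc := discrim_le_zero hquad
  rw [discrim] at hdisc
  nlinarith

theorem sq_intervalIntegral_mul_le_integral_inv_mul_sq_mul_integral_mul_sq {l r : ℝ}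
    (hlr : l ≤ r) {w p g : ℝ → ℝ} (hw : ∀ x ∈ Icc l r, 0 < w x) (hwc : ContinuousOn w (Icc l r))
    (hpc : ContinuousOn p (Icc l r)) (hgc : ContinuousOn g (Icc l r)) :
    (∫ x in l..r, p x * g x) ^ 2 ≤
      (∫ x in l..r, (w x)⁻¹ * p x ^ 2) * ∫ x in l..r, w x * g x ^ 2 := by
  have hint : ∀ {k : ℝ → ℝ}, ContinuousOn k (Icc l r) → IntegrableOn k (Ioc l r) :=
    fun hk => (hk.integrableOn_Icc).mono_set Ioc_subset_Icc_self
  simp only [integral_of_le hlr]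
  refine sq_integral_mul_le_integral_inv_mul_sq_mul_integral_mul_sq
    ((ae_restrict_iff' measurableSet_Ioc).2 (.of_forall fun x hx => hw x (Ioc_subset_Icc_self hx)))
    (hint ?_) (hint (hpc.mul hgc)) (hint (hwc.mul (hgc.pow 2)))
  exact (hwc.inv₀ fun x hx => (hw x hx).ne').mul (hpc.pow 2)

theorem sq_add_le_add_mul_add_of_sq_le_mul {s t D X R Y : ℝ} (hD : 0 ≤ D) (hX : 0 ≤ X)
    (hR : 0 ≤ R) (hY : 0 ≤ Y) (hs : s ^ 2 ≤ D * X) (ht : t ^ 2 ≤ R * Y) :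
    (s + t) ^ 2 ≤ (D + R) * (X + Y) := by
  have hst : (s * t) ^ 2 ≤ (D * Y) * (R * X) := by
    rw [mul_pow]
    nlinarith [mul_le_mul hs ht (sq_nonneg t) (mul_nonneg hD hX)]
  nlinarith [sq_nonneg (D * Y - R * X), mul_nonneg hD hY, mul_nonneg hR hX]

theorem le_mul_of_sq_le_mul_of_le_mul_s4 {E M F Θ : ℝ} (hE : 0 ≤ E) (hM : 0 ≤ M) (hΘ : 0 ≤ Θ)
    (h : E ^ 2 ≤ M * F) (hF : F ≤ Θ * E) : E ≤ Θ * M := by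
  rcases hE.eq_or_lt with rfl | hE
  · positivity
  · nlinarith [mul_le_mul_of_nonneg_left hF hM]

theorem energy_error_eq {l r : ℝ} (hlr : l ≤ r) (a a' f u u' u'' v v' z z' : ℝ → ℝ) (σ : ℝ)
    (ha' : ∀ x ∈ Icc l r, HasDerivWithinAt a (a' x) (Icc l r) x)
    (ha'c : ContinuousOn a' (Icc l r)) (hf : ContinuousOn f (Icc l r))
    (hu' : ∀ x ∈ Icc l r, HasDerivWithinAt u (u' x) (Icc l r) x)
    (hu'' : ∀ x ∈ Icc l r, HasDerivWithinAt u' (u'' x) (Icc l r) x)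
    (hu''c : ContinuousOn u'' (Icc l r))
    (hode : ∀ x ∈ Icc l r, -(a' x * u' x + a x * u'' x) + σ * u x = f x)
    (hv' : ∀ x ∈ Icc l r, HasDerivWithinAt v (v' x) (Icc l r) x)
    (hv'c : ContinuousOn v' (Icc l r)) (hl : v l = u l) (hr : v r = u r)
    (hz' : ∀ x ∈ Icc l r, HasDerivWithinAt z (z' x) (Icc l r) x)
    (hz'c : ContinuousOn z' (Icc l r)) :
    (∫ x in l..r, a x * (v' x - u' x) ^ 2) + σ * ∫ x in l..r, (v x - u x) ^ 2 =
      (∫ x in l..r, (a x * v' x + z x) * (v' x - u' x)) -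
        ∫ x in l..r, (f x - σ * v x - z' x) * (v x - u x) := by
  have haC : ContinuousOn a (Icc l r) := fun x hx => (ha' x hx).continuousWithinAt
  have huC : ContinuousOn u (Icc l r) := fun x hx => (hu' x hx).continuousWithinAt
  have hu'C : ContinuousOn u' (Icc l r) := fun x hx => (hu'' x hx).continuousWithinAt
  have hvC : ContinuousOn v (Icc l r) := fun x hx => (hv' x hx).continuousWithinAt
  have hzC : ContinuousOn z (Icc l r) := fun x hx => (hz' x hx).continuousWithinAt
  have hint : ∀ {k : ℝ → ℝ}, ContinuousOn k (Icc l r) → IntervalIntegrable k volume l r :=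
    fun hk => hk.intervalIntegrable_of_Icc hlr
  have hparts : ∫ x in l..r, (a' x * u' x + a x * u'' x + z' x) * (v x - u x) +
      (a x * u' x + z x) * (v' x - u' x) = 0 := by
    rw [← uIcc_of_le hlr] at ha' hu' hu'' hv' hz'
    rw [integral_deriv_mul_eq_sub_of_hasDerivWithinAt (u := fun x => a x * u' x + z x)
      (v := fun x => v x - u x) (fun x hx => ((ha' x hx).mul (hu'' x hx)).add (hz' x hx))
      (fun x hx => (hv' x hx).sub (hu' x hx)) (hint (by fun_prop)) (hint (by fun_prop)), hl, hr]
    ring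
  calc (∫ x in l..r, a x * (v' x - u' x) ^ 2) + σ * ∫ x in l..r, (v x - u x) ^ 2
      = ∫ x in l..r, a x * (v' x - u' x) ^ 2 + σ * (v x - u x) ^ 2 := by
        rw [integral_add (hint (by fun_prop)) (hint (by fun_prop)),
          intervalIntegral.integral_const_mul]
    _ = ∫ x in l..r, ((a x * v' x + z x) * (v' x - u' x) -
          (f x - σ * v x - z' x) * (v x - u x)) -
          ((a' x * u' x + a x * u'' x + z' x) * (v x - u x) +
            (a x * u' x + z x) * (v' x - u' x)) := by
        refine integral_congr fun x hx => ?_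
        rw [uIcc_of_le hlr] at hx
        linear_combination (u x - v x) * hode x hx
    _ = _ := by
        rw [integral_sub (hint (by fun_prop)) (hint (by fun_prop)), hparts, sub_zero,
          integral_sub (hint (by fun_prop)) (hint (by fun_prop))]

theorem energy_sq_le {l r : ℝ} (hlr : l ≤ r) (a a' f u u' u'' v v' z z' : ℝ → ℝ) (σ : ℝ)
    (ha' : ∀ x ∈ Icc l r, HasDerivWithinAt a (a' x) (Icc l r) x)
    (ha'c : ContinuousOn a' (Icc l r)) (ha : ∀ x ∈ Icc l r, 0 < a x)
    (hf : ContinuousOn f (Icc l r))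
    (hu' : ∀ x ∈ Icc l r, HasDerivWithinAt u (u' x) (Icc l r) x)
    (hu'' : ∀ x ∈ Icc l r, HasDerivWithinAt u' (u'' x) (Icc l r) x)
    (hu''c : ContinuousOn u'' (Icc l r))
    (hode : ∀ x ∈ Icc l r, -(a' x * u' x + a x * u'' x) + σ * u x = f x)
    (hv' : ∀ x ∈ Icc l r, HasDerivWithinAt v (v' x) (Icc l r) x)
    (hv'c : ContinuousOn v' (Icc l r)) (hl : v l = u l) (hr : v r = u r)
    (hz' : ∀ x ∈ Icc l r, HasDerivWithinAt z (z' x) (Icc l r) x)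
    (hz'c : ContinuousOn z' (Icc l r)) {κ : ℝ} (hκ : 0 < κ) :
    ((∫ x in l..r, a x * (v' x - u' x) ^ 2) + σ * ∫ x in l..r, (v x - u x) ^ 2) ^ 2 ≤
      ((∫ x in l..r, (a x)⁻¹ * (a x * v' x + z x) ^ 2) +
          κ⁻¹ * ∫ x in l..r, (f x - σ * v x - z' x) ^ 2) *
        ((∫ x in l..r, a x * (v' x - u' x) ^ 2) + κ * ∫ x in l..r, (v x - u x) ^ 2) := by
  have haC : ContinuousOn a (Icc l r) := fun x hx => (ha' x hx).continuousWithinAt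
  have huC : ContinuousOn u (Icc l r) := fun x hx => (hu' x hx).continuousWithinAt
  have hu'C : ContinuousOn u' (Icc l r) := fun x hx => (hu'' x hx).continuousWithinAt
  have hvC : ContinuousOn v (Icc l r) := fun x hx => (hv' x hx).continuousWithinAt
  have hzC : ContinuousOn z (Icc l r) := fun x hx => (hz' x hx).continuousWithinAt
  have hflux := sq_intervalIntegral_mul_le_integral_inv_mul_sq_mul_integral_mul_sq hlr
    (p := fun x => a x * v' x + z x) (g := fun x => v' x - u' x) ha haC (by fun_prop) (by fun_prop)
  have hres := sq_intervalIntegral_mul_le_integral_inv_mul_sq_mul_integral_mul_sq hlr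
    (w := fun _ => κ) (p := fun x => f x - σ * v x - z' x) (g := fun x => v x - u x)
    (fun _ _ => hκ) continuousOn_const (by fun_prop) (by fun_prop)
  rw [intervalIntegral.integral_const_mul, intervalIntegral.integral_const_mul] at hres
  rw [energy_error_eq hlr a a' f u u' u'' v v' z z' σ ha' ha'c hf hu' hu'' hu''c hode hv' hv'c
    hl hr hz' hz'c, sub_eq_add_neg]
  refine sq_add_le_add_mul_add_of_sq_le_mul ?_ ?_ ?_ ?_ hflux (by rwa [neg_sq])
  · exact integral_nonneg hlr fun x hx => mul_nonneg (inv_nonneg.2 (ha x hx).le) (sq_nonneg _)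
  · exact integral_nonneg hlr fun x hx => mul_nonneg (ha x hx).le (sq_nonneg _)
  · exact mul_nonneg (inv_nonneg.2 hκ.le) (integral_nonneg hlr fun x _ => sq_nonneg _)
  · exact mul_nonneg hκ.le (integral_nonneg hlr fun x _ => sq_nonneg _)

theorem energy_le_majorant_of_sq_le {X Y D R σ σs : ℝ} (hX : 0 ≤ X) (hY : 0 ≤ Y) (hD : 0 ≤ D)
    (hR : 0 ≤ R) (hσ : 0 ≤ σ) (hσs : 0 < σs) (hfried : σs * Y ≤ X)
    (h : ∀ κ > 0, (X + σ * Y) ^ 2 ≤ (D + κ⁻¹ * R) * (X + κ * Y)) :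
    X + σ * Y ≤ (if σ ≤ σs then 2 * σs / (σs + σ) else 1) *
      (D + (if σ ≤ σs then 1 / σs else 1 / σ) * R) := by
  simp only [one_div]
  split_ifs with hσσs
  · refine le_mul_of_sq_le_mul_of_le_mul_s4 (by positivity) (by positivity) (by positivity)
      (h σs hσs) ?_
    rw [div_mul_eq_mul_div, le_div_iff₀ (by positivity)]
    nlinarith [mul_le_mul_of_nonneg_left hfried (sub_nonneg.2 hσσs)]
  · have hσ₀ : 0 < σ := hσs.trans (not_le.1 hσσs)
    exact le_mul_of_sq_le_mul_of_le_mul_s4 (by positivity) (by positivity) zero_le_one (h σ hσ₀)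
      (one_mul _).ge

/-- The paper's main a posteriori error majorant (Theorem 2) for the
one-dimensional diffusion–reaction Dirichlet problem `−(a u')' + σu = f`,
`u(0) = u(1) = 0`, with variable diffusion coefficient `a`, for any `σ ≥ 0`. -/
theorem majorant_1d_variable_coefficient
    (a a' f u u' u'' v v' z z' : ℝ → ℝ) (μ₁ μ₂ σ σs : ℝ)
    (ha' : ∀ x ∈ Icc (0:ℝ) 1, HasDerivWithinAt a (a' x) (Icc 0 1) x)
    (ha'c : ContinuousOn a' (Icc 0 1))
    (hμ₁ : 0 < μ₁) (hbound : ∀ x ∈ Icc (0:ℝ) 1, μ₁ ≤ a x ∧ a x ≤ μ₂)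
    (hf : ContinuousOn f (Icc 0 1))
    (hσ : 0 ≤ σ) (hσs : 0 < σs)
    (hu' : ∀ x ∈ Icc (0:ℝ) 1, HasDerivWithinAt u (u' x) (Icc 0 1) x)
    (hu'' : ∀ x ∈ Icc (0:ℝ) 1, HasDerivWithinAt u' (u'' x) (Icc 0 1) x)
    (hu''c : ContinuousOn u'' (Icc 0 1))
    (hode : ∀ x ∈ Icc (0:ℝ) 1, -(a' x * u' x + a x * u'' x) + σ * u x = f x)
    (hu0 : u 0 = 0) (hu1 : u 1 = 0)
    (hv' : ∀ x ∈ Icc (0:ℝ) 1, HasDerivWithinAt v (v' x) (Icc 0 1) x)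
    (hv'c : ContinuousOn v' (Icc 0 1))
    (hv0 : v 0 = 0) (hv1 : v 1 = 0)
    (hz' : ∀ x ∈ Icc (0:ℝ) 1, HasDerivWithinAt z (z' x) (Icc 0 1) x)
    (hz'c : ContinuousOn z' (Icc 0 1))
    (hfried : σs * ∫ x in (0:ℝ)..1, (v x - u x) ^ 2 ≤
      ∫ x in (0:ℝ)..1, a x * (v' x - u' x) ^ 2) :
    (∫ x in (0:ℝ)..1, a x * (v' x - u' x) ^ 2) +
        σ * ∫ x in (0:ℝ)..1, (v x - u x) ^ 2 ≤
      (if σ ≤ σs then 2 * σs / (σs + σ) else 1) *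
        ((∫ x in (0:ℝ)..1, (a x)⁻¹ * (a x * v' x + z x) ^ 2) +
          (if σ ≤ σs then 1 / σs else 1 / σ) *
            ∫ x in (0:ℝ)..1, (f x - σ * v x - z' x) ^ 2) := by
  have ha : ∀ x ∈ Icc (0:ℝ) 1, 0 < a x := fun x hx => hμ₁.trans_le (hbound x hx).1
  refine energy_le_majorant_of_sq_le ?_ ?_ ?_ ?_ hσ hσs hfried fun κ hκ =>
    energy_sq_le zero_le_one a a' f u u' u'' v v' z z' σ ha' ha'c ha hf hu' hu'' hu''c hode
      hv' hv'c (by rw [hv0, hu0]) (by rw [hv1, hu1]) hz' hz'c hκ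
  · exact integral_nonneg zero_le_one fun x hx => mul_nonneg (ha x hx).le (sq_nonneg _)
  · exact integral_nonneg zero_le_one fun x _ => sq_nonneg _
  · exact integral_nonneg zero_le_one fun x hx =>
      mul_nonneg (inv_nonneg.2 (ha x hx).le) (sq_nonneg _)
  · exact integral_nonneg zero_le_one fun x _ => sq_nonneg _
end

section
/- Let f be continuous on [0,1], σ > 0, and ψ_D, g₁ real numbers. Let u be twice continuously differentiable on [0,1] with −u''(x) + σ·u(x) = f(x) for all x ∈ [0,1], u(0) = ψ_D and u'(1) = g₁; let v be continuously differentiable on [0,1] with v(0) = ψ_D; let z be continuously differentiable on [0,1] with z(1) = −g₁. Then ∫₀¹((v−u)')² dx + σ·∫₀¹(v−u)² dx ≤ ∫₀¹(v'+z)² dx + (1/σ)·∫₀¹(f − σ·v − z')² dx. -/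
/-!
Write `e = v - u` for the error and `q = u' + z` for the flux defect. The residuals of the
majorant are `v' + z = e' + q` and, by the equation, `f - σ v - z' = -(q' + σ e)`, and pointwise
`(e' + q)² + (q' + σ e)² / σ = e'² + σ e² + 2 (q e)' + q² + q'² / σ`.
Integrating, `∫ (q e)' = q(1) e(1) - q(0) e(0)` vanishes because `e(0) = 0` (Dirichlet data) and
`q(1) = 0` (flux data), and the terms `q² + q'² / σ` are nonnegative.
-/

open Set intervalIntegral
open MeasureTheory (volume)

lemma sq_add_mul_sq_add_two_mul_le_sq_add_inv_mul_sq {σ : ℝ} (hσ : 0 < σ) (e e' q q' : ℝ) :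
    e' ^ 2 + σ * e ^ 2 + 2 * (q' * e + q * e') ≤ (e' + q) ^ 2 + 1 / σ * (q' + σ * e) ^ 2 := by
  have hexpand : (e' + q) ^ 2 + 1 / σ * (q' + σ * e) ^ 2
      = e' ^ 2 + σ * e ^ 2 + 2 * (q' * e + q * e') + (q ^ 2 + q' ^ 2 / σ) := by
    field_simp
    ring
  rw [hexpand]
  have : 0 ≤ q ^ 2 + q' ^ 2 / σ := by positivity
  linarith

theorem integral_sq_add_mul_integral_sq_le {a b σ : ℝ} {e e' q q' : ℝ → ℝ}
    (hab : a ≤ b) (hσ : 0 < σ)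
    (he : ∀ x ∈ Icc a b, HasDerivWithinAt e (e' x) (Icc a b) x)
    (hq : ∀ x ∈ Icc a b, HasDerivWithinAt q (q' x) (Icc a b) x)
    (he'c : ContinuousOn e' (Icc a b)) (hq'c : ContinuousOn q' (Icc a b))
    (hbd : q b * e b = q a * e a) :
    (∫ x in a..b, e' x ^ 2) + σ * ∫ x in a..b, e x ^ 2 ≤
      (∫ x in a..b, (e' x + q x) ^ 2) + 1 / σ * ∫ x in a..b, (q' x + σ * e x) ^ 2 := by
  have hec : ContinuousOn e (Icc a b) := fun x hx => (he x hx).continuousWithinAt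
  have hqc : ContinuousOn q (Icc a b) := fun x hx => (hq x hx).continuousWithinAt
  have hint : ∀ {g : ℝ → ℝ}, ContinuousOn g (Icc a b) → IntervalIntegrable g volume a b :=
    fun hg => hg.intervalIntegrable_of_Icc hab
  have hboundary : ∫ x in a..b, (q' x * e x + q x * e' x) = 0 := by
    rw [← uIcc_of_le hab] at hq he
    rw [integral_deriv_mul_eq_sub_of_hasDerivWithinAt hq he (hint hq'c) (hint he'c), hbd,
      sub_self]
  calc (∫ x in a..b, e' x ^ 2) + σ * ∫ x in a..b, e x ^ 2
      = ∫ x in a..b, (e' x ^ 2 + σ * e x ^ 2 + 2 * (q' x * e x + q x * e' x)) := by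
        rw [integral_add, integral_add, integral_const_mul, integral_const_mul, hboundary,
          mul_zero, add_zero]
        all_goals exact hint (by fun_prop)
    _ ≤ ∫ x in a..b, ((e' x + q x) ^ 2 + 1 / σ * (q' x + σ * e x) ^ 2) :=
        integral_mono_on hab (hint (by fun_prop)) (hint (by fun_prop)) fun x _ => sq_add_mul_sq_add_two_mul_le_sq_add_inv_mul_sq hσ _ _ _ _
    _ = (∫ x in a..b, (e' x + q x) ^ 2) + 1 / σ * ∫ x in a..b, (q' x + σ * e x) ^ 2 := by
        rw [integral_add, integral_const_mul]
        all_goals exact hint (by fun_prop)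

theorem aubin_majorant_1d_mixed_bc_general
    (f u u' u'' v v' z z' : ℝ → ℝ) (σ ψD g₁ : ℝ) (hσ : 0 < σ)
    (hu' : ∀ x ∈ Icc (0:ℝ) 1, HasDerivWithinAt u (u' x) (Icc 0 1) x)
    (hu'' : ∀ x ∈ Icc (0:ℝ) 1, HasDerivWithinAt u' (u'' x) (Icc 0 1) x)
    (hu''c : ContinuousOn u'' (Icc 0 1))
    (hode : ∀ x ∈ Icc (0:ℝ) 1, -u'' x + σ * u x = f x)
    (hu0 : u 0 = ψD) (hu1 : u' 1 = g₁)
    (hv' : ∀ x ∈ Icc (0:ℝ) 1, HasDerivWithinAt v (v' x) (Icc 0 1) x)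
    (hv'c : ContinuousOn v' (Icc 0 1))
    (hv0 : v 0 = ψD)
    (hz' : ∀ x ∈ Icc (0:ℝ) 1, HasDerivWithinAt z (z' x) (Icc 0 1) x)
    (hz'c : ContinuousOn z' (Icc 0 1))
    (hz1 : z 1 = -g₁) :
    (∫ x in (0:ℝ)..1, (v' x - u' x) ^ 2) +
        σ * ∫ x in (0:ℝ)..1, (v x - u x) ^ 2 ≤
      (∫ x in (0:ℝ)..1, (v' x + z x) ^ 2) +
        (1 / σ) * ∫ x in (0:ℝ)..1, (f x - σ * v x - z' x) ^ 2 := by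
  have hu'c : ContinuousOn u' (Icc 0 1) := fun x hx => (hu'' x hx).continuousWithinAt
  have key := integral_sq_add_mul_integral_sq_le (e := fun x => v x - u x)
    (q := fun x => u' x + z x) zero_le_one hσ
    (fun x hx => (hv' x hx).sub (hu' x hx)) (fun x hx => (hu'' x hx).add (hz' x hx))
    (hv'c.sub hu'c) (hu''c.add hz'c) (by simp [hu0, hv0, hu1, hz1])
  have hflux : ∫ x in (0:ℝ)..1, (v' x - u' x + (u' x + z x)) ^ 2
      = ∫ x in (0:ℝ)..1, (v' x + z x) ^ 2 :=
    integral_congr fun x _ => by ring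
  have hequilibrium : ∫ x in (0:ℝ)..1, (u'' x + z' x + σ * (v x - u x)) ^ 2
      = ∫ x in (0:ℝ)..1, (f x - σ * v x - z' x) ^ 2 := by
    refine integral_congr fun x hx => ?_
    rw [uIcc_of_le zero_le_one] at hx
    simp only [← hode x hx]
    ring
  rwa [hflux, hequilibrium] at key

/-- Aubin's a posteriori error majorant (Theorem 1) for the one-dimensional
reaction–diffusion problem with mixed boundary conditions `u(0) = ψ_D`,
`u'(1) = g₁`; the test function `z` satisfies the flux condition `z(1) = −g₁`. -/
theorem aubin_majorant_1d_mixed_bc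
    (f u u' u'' v v' z z' : ℝ → ℝ) (σ ψD g₁ : ℝ) (hσ : 0 < σ)
    (hf : ContinuousOn f (Icc 0 1))
    (hu' : ∀ x ∈ Icc (0:ℝ) 1, HasDerivWithinAt u (u' x) (Icc 0 1) x)
    (hu'' : ∀ x ∈ Icc (0:ℝ) 1, HasDerivWithinAt u' (u'' x) (Icc 0 1) x)
    (hu''c : ContinuousOn u'' (Icc 0 1))
    (hode : ∀ x ∈ Icc (0:ℝ) 1, -u'' x + σ * u x = f x)
    (hu0 : u 0 = ψD) (hu1 : u' 1 = g₁)
    (hv' : ∀ x ∈ Icc (0:ℝ) 1, HasDerivWithinAt v (v' x) (Icc 0 1) x)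
    (hv'c : ContinuousOn v' (Icc 0 1))
    (hv0 : v 0 = ψD)
    (hz' : ∀ x ∈ Icc (0:ℝ) 1, HasDerivWithinAt z (z' x) (Icc 0 1) x)
    (hz'c : ContinuousOn z' (Icc 0 1))
    (hz1 : z 1 = -g₁) :
    (∫ x in (0:ℝ)..1, (v' x - u' x) ^ 2) +
        σ * ∫ x in (0:ℝ)..1, (v x - u x) ^ 2 ≤
      (∫ x in (0:ℝ)..1, (v' x + z x) ^ 2) +
        (1 / σ) * ∫ x in (0:ℝ)..1, (f x - σ * v x - z' x) ^ 2 :=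
  aubin_majorant_1d_mixed_bc_general f u u' u'' v v' z z' σ ψD g₁ hσ hu' hu'' hu''c hode hu0 hu1 hv'
    hv'c hv0 hz' hz'c hz1
end

section
/- Let Ω = (0,1)×(0,1) ⊂ ℝ². Let f be continuous on the closed square [0,1]², let u be twice continuously differentiable on [0,1]² with −Δu(x) = f(x) for all x ∈ Ω and u = 0 on ∂Ω; let v be continuously differentiable on [0,1]² with v = 0 on ∂Ω; let z = (z₁,z₂) be a continuously differentiable vector field on [0,1]²; and let β₁, β₂ : [0,1]² → ℝ be bounded measurable functions with β₁(x) + β₂(x) = 1 for all x. For k = 1,2 define R_k(x₁,x₂) = ∫₀^{x_k} (β_k·(f − div z)) evaluated with the k-th coordinate replaced by the integration variable η_k, dη_k. Then (∫_Ω |∇(v−u)|² dx)^{1/2} ≤ (∫_Ω |∇v + z|² dx)^{1/2} + Σ_{k=1,2} (∫_Ω R_k² dx)^{1/2}. -/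
/-!
Write `w = v - u`, `e = ∇w` and `q = ∇u + z`. The equation `-Δu = f` says
`div q + (f - div z) = 0`, and `∂ₖ Rₖ = βₖ (f - div z)` with `β₁ + β₂ = 1`. Integrating by parts
one variable at a time (`w` vanishes on the boundary) therefore gives `∫ e · (q + R) = 0`, where
`R = (R₁, R₂)`. Since `e = (∇v + z) - q`, this reads `‖e‖² = ∫ e · (∇v + z) + ∫ e · R`, and
Cauchy–Schwarz bounds the right-hand side by `‖e‖ (‖∇v + z‖ + ‖R₁‖ + ‖R₂‖)`.

The `Rₖ` are primitives of merely bounded measurable functions, so integration by parts against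
them goes through Fubini on the triangle `{η ≤ t}` instead of the fundamental theorem of calculus.
-/

open Set MeasureTheory

section CauchySchwarz

variable {ι α : Type*} [Fintype ι] [MeasurableSpace α] {μ : Measure α}

theorem integral_mul_le_sqrt_mul_sqrt {f g : α → ℝ} (hf : MemLp f 2 μ) (hg : MemLp g 2 μ) :
    ∫ x, f x * g x ∂μ ≤ √(∫ x, f x ^ 2 ∂μ) * √(∫ x, g x ^ 2 ∂μ) := by
  have habs : ∀ {h : α → ℝ}, MemLp h 2 μ → MemLp (fun x => |h x|) (ENNReal.ofReal 2) μ :=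
    fun hh => by rw [ENNReal.ofReal_ofNat]; exact hh.abs
  calc ∫ x, f x * g x ∂μ ≤ ∫ x, |f x| * |g x| ∂μ :=
        integral_mono (hf.integrable_mul hg) (hf.abs.integrable_mul hg.abs) fun x => by
          simpa only [abs_mul] using le_abs_self (f x * g x)
    _ ≤ (∫ x, |f x| ^ (2 : ℝ) ∂μ) ^ (1 / (2 : ℝ)) * (∫ x, |g x| ^ (2 : ℝ) ∂μ) ^ (1 / (2 : ℝ)) :=
        integral_mul_le_Lp_mul_Lq_of_nonneg Real.HolderConjugate.two_two
          (ae_of_all _ fun _ => abs_nonneg _) (ae_of_all _ fun _ => abs_nonneg _)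
          (habs hf) (habs hg)
    _ = √(∫ x, f x ^ 2 ∂μ) * √(∫ x, g x ^ 2 ∂μ) := by
        simp only [Real.rpow_two, sq_abs, ← Real.sqrt_eq_rpow]

theorem integral_sum_mul_le_sqrt_mul_sqrt {f g : ι → α → ℝ} (hf : ∀ i, MemLp (f i) 2 μ)
    (hg : ∀ i, MemLp (g i) 2 μ) :
    ∫ x, ∑ i, f i x * g i x ∂μ ≤
      √(∫ x, ∑ i, f i x ^ 2 ∂μ) * √(∫ x, ∑ i, g i x ^ 2 ∂μ) := by
  have hnorm : ∀ {h : ι → α → ℝ}, (∀ i, MemLp (h i) 2 μ) →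
      MemLp (fun x => √(∑ i, h i x ^ 2)) 2 μ := fun hh => by
    refine (memLp_two_iff_integrable_sq ?_).2 ?_
    · exact Real.continuous_sqrt.comp_aestronglyMeasurable
        (Finset.aestronglyMeasurable_fun_sum _ fun i _ => (hh i).1.pow 2)
    · simpa [Real.sq_sqrt, Finset.sum_nonneg, sq_nonneg] using
        integrable_finsetSum _ fun i _ => (hh i).integrable_sq
  calc ∫ x, ∑ i, f i x * g i x ∂μ
      ≤ ∫ x, √(∑ i, f i x ^ 2) * √(∑ i, g i x ^ 2) ∂μ :=
        integral_mono (integrable_finsetSum _ fun i _ => (hf i).integrable_mul (hg i))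
          ((hnorm hf).integrable_mul (hnorm hg)) fun x => Real.sum_mul_le_sqrt_mul_sqrt _ _ _
    _ ≤ _ := integral_mul_le_sqrt_mul_sqrt (hnorm hf) (hnorm hg)
    _ = _ := by simp only [Real.sq_sqrt (Finset.sum_nonneg fun _ _ => sq_nonneg _)]

theorem sqrt_integral_sum_sq_le_add_of_orthogonal {f a r : ι → α → ℝ} (hf : ∀ i, MemLp (f i) 2 μ)
    (ha : ∀ i, MemLp (a i) 2 μ) (hr : ∀ i, MemLp (r i) 2 μ)
    (h : ∫ x, ∑ i, f i x * (f i x - a i x - r i x) ∂μ = 0) :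
    √(∫ x, ∑ i, f i x ^ 2 ∂μ) ≤ √(∫ x, ∑ i, a i x ^ 2 ∂μ) + ∑ i, √(∫ x, r i x ^ 2 ∂μ) := by
  set X := ∫ x, ∑ i, f i x ^ 2 ∂μ
  have hfr_int : ∀ i, Integrable (fun x => f i x * r i x) μ := fun i => (hf i).integrable_mul (hr i)
  have hX : X = ∫ x, ∑ i, f i x * a i x ∂μ + ∑ i, ∫ x, f i x * r i x ∂μ := by
    have hsplit : (fun x => ∑ i, f i x * (f i x - a i x - r i x)) = fun x =>
        ∑ i, f i x ^ 2 - ∑ i, f i x * a i x - ∑ i, f i x * r i x := by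
      ext x
      simp only [← Finset.sum_sub_distrib]
      exact Finset.sum_congr rfl fun i _ => by ring
    have hff : Integrable (fun x => ∑ i, f i x ^ 2) μ :=
      integrable_finsetSum _ fun i _ => (hf i).integrable_sq
    have hfa : Integrable (fun x => ∑ i, f i x * a i x) μ :=
      integrable_finsetSum _ fun i _ => (hf i).integrable_mul (ha i)
    have hfr : Integrable (fun x => ∑ i, f i x * r i x) μ :=
      integrable_finsetSum _ fun i _ => hfr_int i
    rw [hsplit, integral_sub (by exact hff.sub hfa) hfr,
      integral_sub hff hfa, integral_finsetSum _ fun i _ => hfr_int i] at h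
    linarith
  have hfr_le : ∀ i, ∫ x, f i x * r i x ∂μ ≤ √X * √(∫ x, r i x ^ 2 ∂μ) := fun i =>
    (integral_mul_le_sqrt_mul_sqrt (hf i) (hr i)).trans <| by
      gcongr
      exact integral_mono (hf i).integrable_sq
        (integrable_finsetSum _ fun i _ => (hf i).integrable_sq) fun x =>
          Finset.single_le_sum (f := fun i => f i x ^ 2) (fun i _ => sq_nonneg _)
            (Finset.mem_univ i)
  have hle : X ≤ √X * √(∫ x, ∑ i, a i x ^ 2 ∂μ) + ∑ i, √X * √(∫ x, r i x ^ 2 ∂μ) :=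
    hX.trans_le (add_le_add (integral_sum_mul_le_sqrt_mul_sqrt hf ha)
      (Finset.sum_le_sum fun i _ => hfr_le i))
  rw [← Finset.mul_sum, ← mul_add] at hle
  have hX0 : 0 ≤ X := integral_nonneg fun x => Finset.sum_nonneg fun i _ => sq_nonneg _
  have hM : 0 ≤ √(∫ x, ∑ i, a i x ^ 2 ∂μ) + ∑ i, √(∫ x, r i x ^ 2 ∂μ) := by positivity
  nlinarith [Real.sq_sqrt hX0, Real.sqrt_nonneg X]

end CauchySchwarz

theorem integral_deriv_mul_primitive {a b : ℝ} (hab : a ≤ b) {w w' G : ℝ → ℝ}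
    (hw : ∀ t ∈ Icc a b, HasDerivWithinAt w (w' t) (Icc a b) t)
    (hw' : IntervalIntegrable w' volume a b) (hG : IntervalIntegrable G volume a b) :
    ∫ t in a..b, w' t * ∫ η in a..t, G η =
      w b * (∫ η in a..b, G η) - ∫ η in a..b, w η * G η := by
  set μ := volume.restrict (Ioc a b)
  set F : ℝ × ℝ → ℝ := {z | z.2 ≤ z.1}.indicator fun z => w' z.1 * G z.2
  have hF : Integrable F (μ.prod μ) :=
    ((hw'.1.mul_prod hG.1).indicator (measurableSet_le measurable_snd measurable_fst))
  have hinner : ∀ t ∈ Ioc a b, w' t * ∫ η in a..t, G η = ∫ η, F (t, η) ∂μ := by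
    intro t ht
    have hslice : (fun η => F (t, η)) = (Iic t).indicator fun η => w' t * G η := by
      ext η; simp [F, indicator_apply]
    rw [hslice, integral_indicator measurableSet_Iic, Measure.restrict_restrict measurableSet_Iic,
      Iic_inter_Ioc_of_le ht.2, intervalIntegral.integral_of_le ht.1.le, integral_const_mul]
  have hftc : ∀ η ∈ Ioc a b, ∫ t, F (t, η) ∂μ = (w b - w η) * G η := by
    intro η hη
    have hslice : (fun t => F (t, η)) = (Ici η).indicator fun t => w' t * G η := by
      ext t; simp [F, indicator_apply]
    rw [hslice, integral_indicator measurableSet_Ici, Measure.restrict_restrict measurableSet_Ici,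
      integral_mul_const]
    have hset : Ici η ∩ Ioc a b = Icc η b := by
      ext t; simp only [mem_inter_iff, mem_Ici, mem_Ioc, mem_Icc]
      exact ⟨fun h => ⟨h.1, h.2.2⟩, fun h => ⟨h.1, hη.1.trans_le h.1, h.2⟩⟩
    have hsub : Icc η b ⊆ Icc a b := Icc_subset_Icc_left hη.1.le
    rw [hset, integral_Icc_eq_integral_Ioc, ← intervalIntegral.integral_of_le hη.2,
      intervalIntegral.integral_eq_sub_of_hasDerivAt_of_le hη.2
        (fun t ht => (hw t (hsub ht)).continuousWithinAt.mono hsub)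
        (fun t ht => (hw t (hsub (Ioo_subset_Icc_self ht))).hasDerivAt
          (Icc_mem_nhds (hη.1.trans ht.1) ht.2))
        (hw'.mono_set (by rw [uIcc_of_le hab, uIcc_of_le hη.2]; exact hsub))]
  have hwc : ContinuousOn w (uIcc a b) := by
    rw [uIcc_of_le hab]; exact fun t ht => (hw t ht).continuousWithinAt
  calc ∫ t in a..b, w' t * ∫ η in a..t, G η = ∫ t, ∫ η, F (t, η) ∂μ ∂μ := by
        rw [intervalIntegral.integral_of_le hab]
        exact setIntegral_congr_fun measurableSet_Ioc hinner
    _ = ∫ η, ∫ t, F (t, η) ∂μ ∂μ := integral_integral_swap hF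
    _ = ∫ η in a..b, (w b - w η) * G η := by
        rw [intervalIntegral.integral_of_le hab]
        exact setIntegral_congr_fun measurableSet_Ioc hftc
    _ = _ := by
        simp only [sub_mul]
        rw [intervalIntegral.integral_sub (hG.const_mul _) (hG.continuousOn_mul hwc),
          intervalIntegral.integral_const_mul]

theorem measurable_indicator_of_continuousOn {X : Type*} [TopologicalSpace X] [MeasurableSpace X]
    [OpensMeasurableSpace X] {s : Set X} {ψ : X → ℝ} (hψ : ContinuousOn ψ s)
    (hs : MeasurableSet s) : Measurable (s.indicator ψ) := by
  classical
  rw [← piecewise_eq_indicator]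
  exact hψ.measurable_piecewise continuousOn_const hs

noncomputable def primitiveFst (a : ℝ) (g : ℝ × ℝ → ℝ) (p : ℝ × ℝ) : ℝ :=
  ∫ η in a..p.1, g (η, p.2)

noncomputable def primitiveSnd (c : ℝ) (g : ℝ × ℝ → ℝ) (p : ℝ × ℝ) : ℝ :=
  ∫ η in c..p.2, g (p.1, η)

theorem measurable_primitiveFst {g : ℝ × ℝ → ℝ} (hg : Measurable g) (a : ℝ) :
    Measurable (primitiveFst a g) := by
  have hset : MeasurableSet {z : (ℝ × ℝ) × ℝ | z.2 ∈ uIoc a z.1.1} :=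
    (measurableSet_lt (f := fun z : (ℝ × ℝ) × ℝ => min a z.1.1) (by fun_prop)
      measurable_snd).inter
      (measurableSet_le (g := fun z : (ℝ × ℝ) × ℝ => max a z.1.1) measurable_snd (by fun_prop))
  have hint : Measurable fun p : ℝ × ℝ => ∫ η in uIoc a p.1, g (η, p.2) := by
    convert (((hg.comp (measurable_snd.prodMk measurable_fst.snd)).indicator
      hset).stronglyMeasurable.integral_prod_right' (ν := volume)).measurable using 2 with p
    rw [← integral_indicator measurableSet_uIoc]
    rfl
  unfold primitiveFst
  simp_rw [intervalIntegral.intervalIntegral_eq_integral_uIoc]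
  exact (Measurable.ite (measurableSet_le measurable_const measurable_fst)
    (measurable_const (a := (1 : ℝ))) measurable_const).smul hint

theorem measurable_primitiveSnd {g : ℝ × ℝ → ℝ} (hg : Measurable g) (c : ℝ) :
    Measurable (primitiveSnd c g) :=
  (measurable_primitiveFst (hg.comp measurable_swap) c).comp measurable_swap

instance isFiniteMeasure_restrict_Ioo_prod_Ioo (a b c d : ℝ) :
    IsFiniteMeasure (volume.restrict (Ioo a b ×ˢ Ioo c d)) :=
  isFiniteMeasure_restrict.2
    ((Metric.isBounded_Ioo a b).prod (Metric.isBounded_Ioo c d)).measure_lt_top.ne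

section Rectangle

variable {a b c d : ℝ}

theorem continuousOn_of_hasDerivWithinAt_fst_snd {A A₁ A₂ : ℝ × ℝ → ℝ}
    (h₁ : ∀ p ∈ Icc a b ×ˢ Icc c d, HasDerivWithinAt (fun t => A (t, p.2)) (A₁ p) (Icc a b) p.1)
    (h₂ : ∀ p ∈ Icc a b ×ˢ Icc c d, HasDerivWithinAt (fun t => A (p.1, t)) (A₂ p) (Icc c d) p.2)
    (h₁c : ContinuousOn A₁ (Icc a b ×ˢ Icc c d)) (h₂c : ContinuousOn A₂ (Icc a b ×ˢ Icc c d)) :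
    ContinuousOn A (Icc a b ×ˢ Icc c d) := by
  obtain ⟨C₁, hC₁⟩ := (isCompact_Icc.prod isCompact_Icc).exists_bound_of_continuousOn h₁c
  obtain ⟨C₂, hC₂⟩ := (isCompact_Icc.prod isCompact_Icc).exists_bound_of_continuousOn h₂c
  refine (LipschitzOnWith.of_dist_le' (K := C₁ + C₂) fun p hp q hq => ?_).continuousOn
  have hx : ‖A (p.1, p.2) - A (q.1, p.2)‖ ≤ C₁ * ‖p.1 - q.1‖ :=
    Convex.norm_image_sub_le_of_norm_hasDerivWithin_le (f := fun t => A (t, p.2))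
      (fun t ht => h₁ (t, p.2) ⟨ht, hp.2⟩) (fun t ht => hC₁ _ ⟨ht, hp.2⟩) (convex_Icc a b) hq.1 hp.1
  have hy : ‖A (q.1, p.2) - A (q.1, q.2)‖ ≤ C₂ * ‖p.2 - q.2‖ :=
    Convex.norm_image_sub_le_of_norm_hasDerivWithin_le (f := fun t => A (q.1, t))
      (fun t ht => h₂ (q.1, t) ⟨hq.1, ht⟩) (fun t ht => hC₂ _ ⟨hq.1, ht⟩) (convex_Icc c d) hq.2 hp.2
  have hC₁0 : 0 ≤ C₁ := (norm_nonneg _).trans (hC₁ p hp)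
  have hC₂0 : 0 ≤ C₂ := (norm_nonneg _).trans (hC₂ p hp)
  calc dist (A p) (A q) ≤ ‖A (p.1, p.2) - A (q.1, p.2)‖ + ‖A (q.1, p.2) - A (q.1, q.2)‖ :=
        dist_eq_norm (A p) (A q) ▸ norm_sub_le_norm_sub_add_norm_sub _ _ _
    _ ≤ C₁ * dist p q + C₂ * dist p q := by
        rw [← dist_eq_norm, ← dist_eq_norm] at hx hy
        gcongr
        exacts [hx.trans (by gcongr; exact le_max_left _ _),
          hy.trans (by gcongr; exact le_max_right _ _)]
    _ = (C₁ + C₂) * dist p q := by ring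

theorem memLp_top_restrict_Ioo_prod_of_abs_le {F : ℝ × ℝ → ℝ}
    (hF : AEStronglyMeasurable F (volume.restrict (Ioo a b ×ˢ Ioo c d))) {C : ℝ}
    (hC : ∀ p ∈ Icc a b ×ˢ Icc c d, |F p| ≤ C) :
    MemLp F ⊤ (volume.restrict (Ioo a b ×ˢ Ioo c d)) :=
  memLp_top_of_bound hF C <| ae_restrict_of_forall_mem (measurableSet_Ioo.prod measurableSet_Ioo)
    fun p hp => hC p ⟨Ioo_subset_Icc_self hp.1, Ioo_subset_Icc_self hp.2⟩

theorem ContinuousOn.memLp_top_restrict_Ioo_prod {F : ℝ × ℝ → ℝ}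
    (hF : ContinuousOn F (Icc a b ×ˢ Icc c d)) :
    MemLp F ⊤ (volume.restrict (Ioo a b ×ˢ Ioo c d)) :=
  have ⟨_, hC⟩ := (isCompact_Icc.prod isCompact_Icc).exists_bound_of_continuousOn hF
  memLp_top_restrict_Ioo_prod_of_abs_le
    ((hF.mono (prod_mono Ioo_subset_Icc_self Ioo_subset_Icc_self)).aestronglyMeasurable
      (measurableSet_Ioo.prod measurableSet_Ioo)) hC

theorem memLp_top_mul_of_continuousOn {β ψ : ℝ × ℝ → ℝ} (hβ : Measurable β) {C : ℝ}
    (hβC : ∀ p, |β p| ≤ C) (hψ : ContinuousOn ψ (Icc a b ×ˢ Icc c d)) :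
    MemLp (β * ψ) ⊤ (volume.restrict (Ioo a b ×ˢ Ioo c d)) :=
  hψ.memLp_top_restrict_Ioo_prod.mul
    (memLp_top_of_bound hβ.aestronglyMeasurable C (ae_of_all _ hβC))

theorem exists_abs_mul_le_of_continuousOn {β ψ : ℝ × ℝ → ℝ} {C : ℝ} (hβC : ∀ p, |β p| ≤ C)
    (hψ : ContinuousOn ψ (Icc a b ×ˢ Icc c d)) :
    ∃ C', ∀ p ∈ Icc a b ×ˢ Icc c d, |(β * ψ) p| ≤ C' :=
  have ⟨Cψ, hCψ⟩ := (isCompact_Icc.prod isCompact_Icc).exists_bound_of_continuousOn hψ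
  ⟨C * Cψ, fun p hp => (abs_mul (β p) (ψ p)).trans_le <|
    mul_le_mul (hβC p) (hCψ p hp) (abs_nonneg _) ((abs_nonneg _).trans (hβC p))⟩

theorem primitiveFst_congr {g g' : ℝ × ℝ → ℝ} (h : EqOn g g' (Icc a b ×ˢ Icc c d))
    {p : ℝ × ℝ} (hp : p ∈ Icc a b ×ˢ Icc c d) : primitiveFst a g p = primitiveFst a g' p := by
  refine intervalIntegral.integral_congr fun η hη => h ⟨?_, hp.2⟩
  rw [uIcc_of_le hp.1.1] at hη
  exact ⟨hη.1, hη.2.trans hp.1.2⟩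

theorem primitiveSnd_congr {g g' : ℝ × ℝ → ℝ} (h : EqOn g g' (Icc a b ×ˢ Icc c d))
    {p : ℝ × ℝ} (hp : p ∈ Icc a b ×ˢ Icc c d) : primitiveSnd c g p = primitiveSnd c g' p :=
  primitiveFst_congr (g := g ∘ Prod.swap) (g' := g' ∘ Prod.swap) (b := d) (c := a) (d := b)
    (fun _ hq => h ⟨hq.2, hq.1⟩) (p := p.swap) ⟨hp.2, hp.1⟩

theorem abs_primitiveFst_le {g : ℝ × ℝ → ℝ} {C : ℝ}
    (hgC : ∀ p ∈ Icc a b ×ˢ Icc c d, |g p| ≤ C) {p : ℝ × ℝ} (hp : p ∈ Icc a b ×ˢ Icc c d) :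
    |primitiveFst a g p| ≤ C * (b - a) := by
  have hC : 0 ≤ C := (abs_nonneg _).trans (hgC p hp)
  calc |primitiveFst a g p| ≤ C * |p.1 - a| :=
        intervalIntegral.norm_integral_le_of_norm_le_const (f := fun η => g (η, p.2)) fun η hη => by
          rw [uIoc_of_le hp.1.1] at hη
          exact hgC (η, p.2) ⟨⟨hη.1.le, hη.2.trans hp.1.2⟩, hp.2⟩
    _ ≤ C * (b - a) := by
        gcongr; rw [abs_of_nonneg (sub_nonneg.2 hp.1.1)]; linarith [hp.1.2]

theorem abs_primitiveSnd_le {g : ℝ × ℝ → ℝ} {C : ℝ}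
    (hgC : ∀ p ∈ Icc a b ×ˢ Icc c d, |g p| ≤ C) {p : ℝ × ℝ} (hp : p ∈ Icc a b ×ˢ Icc c d) :
    |primitiveSnd c g p| ≤ C * (d - c) :=
  abs_primitiveFst_le (g := g ∘ Prod.swap) (b := d) (c := a) (d := b)
    (fun q hq => hgC q.swap ⟨hq.2, hq.1⟩) (p := p.swap) ⟨hp.2, hp.1⟩

-- `ψ` is only continuous on the rectangle: its zero extension makes `β * ψ` measurable on the
-- whole plane without changing the primitive on the rectangle.
theorem memLp_top_primitiveFst_mul {β ψ : ℝ × ℝ → ℝ} (hβ : Measurable β) {C : ℝ}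
    (hβC : ∀ p, |β p| ≤ C) (hψ : ContinuousOn ψ (Icc a b ×ˢ Icc c d)) :
    MemLp (primitiveFst a (β * ψ)) ⊤ (volume.restrict (Ioo a b ×ˢ Ioo c d)) := by
  obtain ⟨C', hC'⟩ := exists_abs_mul_le_of_continuousOn hβC hψ
  have hψm := measurable_indicator_of_continuousOn hψ (measurableSet_Icc.prod measurableSet_Icc)
  refine memLp_top_restrict_Ioo_prod_of_abs_le
    ((measurable_primitiveFst (hβ.mul hψm) a).aestronglyMeasurable.congr
      (ae_restrict_of_forall_mem (measurableSet_Ioo.prod measurableSet_Ioo) fun p hp => ?_))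
    fun p hp => abs_primitiveFst_le hC' hp
  refine primitiveFst_congr (fun q hq => ?_) (prod_mono Ioo_subset_Icc_self Ioo_subset_Icc_self hp)
  simp only [Pi.mul_apply, indicator_of_mem hq]

theorem memLp_top_primitiveSnd_mul {β ψ : ℝ × ℝ → ℝ} (hβ : Measurable β) {C : ℝ}
    (hβC : ∀ p, |β p| ≤ C) (hψ : ContinuousOn ψ (Icc a b ×ˢ Icc c d)) :
    MemLp (primitiveSnd c (β * ψ)) ⊤ (volume.restrict (Ioo a b ×ˢ Ioo c d)) := by
  obtain ⟨C', hC'⟩ := exists_abs_mul_le_of_continuousOn hβC hψ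
  have hψm := measurable_indicator_of_continuousOn hψ (measurableSet_Icc.prod measurableSet_Icc)
  refine memLp_top_restrict_Ioo_prod_of_abs_le
    ((measurable_primitiveSnd (hβ.mul hψm) c).aestronglyMeasurable.congr
      (ae_restrict_of_forall_mem (measurableSet_Ioo.prod measurableSet_Ioo) fun p hp => ?_))
    fun p hp => abs_primitiveSnd_le hC' hp
  refine primitiveSnd_congr (fun q hq => ?_) (prod_mono Ioo_subset_Icc_self Ioo_subset_Icc_self hp)
  simp only [Pi.mul_apply, indicator_of_mem hq]

theorem setIntegral_Ioo_prod_eq_integral_intervalIntegral (hab : a ≤ b) {F : ℝ × ℝ → ℝ}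
    (hF : IntegrableOn F (Ioo a b ×ˢ Ioo c d)) :
    ∫ p in Ioo a b ×ˢ Ioo c d, F p = ∫ y in Ioo c d, ∫ x in a..b, F (x, y) := by
  rw [Measure.volume_eq_prod] at hF ⊢
  rw [← setIntegral_prod_swap, setIntegral_prod (fun z => F z.swap) hF.swap]
  refine setIntegral_congr_fun measurableSet_Ioo fun y _ => ?_
  rw [intervalIntegral.integral_of_le hab, integral_Ioc_eq_integral_Ioo]
  rfl

theorem setIntegral_Ioo_prod_swap (F : ℝ × ℝ → ℝ) :
    ∫ p in Ioo a b ×ˢ Ioo c d, F p = ∫ p in Ioo c d ×ˢ Ioo a b, F p.swap := by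
  rw [Measure.volume_eq_prod, setIntegral_prod_swap]

theorem setIntegral_deriv_fst_mul_add_primitiveFst (hab : a ≤ b) {w e q dq β ψ : ℝ × ℝ → ℝ}
    {C : ℝ}
    (hw : ∀ p ∈ Icc a b ×ˢ Icc c d, HasDerivWithinAt (fun t => w (t, p.2)) (e p) (Icc a b) p.1)
    (hq : ∀ p ∈ Icc a b ×ˢ Icc c d, HasDerivWithinAt (fun t => q (t, p.2)) (dq p) (Icc a b) p.1)
    (hwc : ContinuousOn w (Icc a b ×ˢ Icc c d)) (hec : ContinuousOn e (Icc a b ×ˢ Icc c d))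
    (hqc : ContinuousOn q (Icc a b ×ˢ Icc c d)) (hdqc : ContinuousOn dq (Icc a b ×ˢ Icc c d))
    (hwa : ∀ y ∈ Icc c d, w (a, y) = 0) (hwb : ∀ y ∈ Icc c d, w (b, y) = 0)
    (hβ : Measurable β) (hβC : ∀ p, |β p| ≤ C) (hψ : ContinuousOn ψ (Icc a b ×ˢ Icc c d)) :
    ∫ p in Ioo a b ×ˢ Ioo c d, e p * (q p + primitiveFst a (β * ψ) p) =
      -∫ p in Ioo a b ×ˢ Ioo c d, w p * (dq p + β p * ψ p) := by
  have hL : IntegrableOn (fun p => e p * (q p + primitiveFst a (β * ψ) p)) (Ioo a b ×ˢ Ioo c d) :=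
    ((hqc.memLp_top_restrict_Ioo_prod.add (memLp_top_primitiveFst_mul hβ hβC hψ)).mul
      hec.memLp_top_restrict_Ioo_prod).integrable le_top
  have hR : IntegrableOn (fun p => w p * (dq p + β p * ψ p)) (Ioo a b ×ˢ Ioo c d) :=
    ((hdqc.memLp_top_restrict_Ioo_prod.add (memLp_top_mul_of_continuousOn hβ hβC hψ)).mul
      hwc.memLp_top_restrict_Ioo_prod).integrable le_top
  rw [setIntegral_Ioo_prod_eq_integral_intervalIntegral hab hL,
    setIntegral_Ioo_prod_eq_integral_intervalIntegral hab hR, ← integral_neg]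
  refine setIntegral_congr_fun measurableSet_Ioo fun y hy => ?_
  have hy' : y ∈ Icc c d := Ioo_subset_Icc_self hy
  have hslice : ∀ {F : ℝ × ℝ → ℝ}, ContinuousOn F (Icc a b ×ˢ Icc c d) →
      ContinuousOn (fun t => F (t, y)) (uIcc a b) := fun hF => by
    rw [uIcc_of_le hab]; exact hF.comp (by fun_prop) fun t ht => ⟨ht, hy'⟩
  have hwy : ∀ t ∈ uIcc a b, HasDerivWithinAt (fun t => w (t, y)) (e (t, y)) (uIcc a b) t := by
    rw [uIcc_of_le hab]; exact fun t ht => hw (t, y) ⟨ht, hy'⟩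
  have hqy : ∀ t ∈ uIcc a b, HasDerivWithinAt (fun t => q (t, y)) (dq (t, y)) (uIcc a b) t := by
    rw [uIcc_of_le hab]; exact fun t ht => hq (t, y) ⟨ht, hy'⟩
  have hgy : IntervalIntegrable (fun t => β (t, y) * ψ (t, y)) volume a b :=
    (intervalIntegrable_const.mono_fun' (hβ.comp measurable_prodMk_right).aestronglyMeasurable
      (ae_of_all _ fun t => hβC (t, y))).mul_continuousOn (hslice hψ)
  have hparts := intervalIntegral.integral_mul_deriv_eq_deriv_mul_of_hasDerivWithinAt hwy hqy
    (hslice hec).intervalIntegrable (hslice hdqc).intervalIntegrable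
  have hprim := integral_deriv_mul_primitive hab (w := fun t => w (t, y))
    (fun t ht => hw (t, y) ⟨ht, hy'⟩) (hslice hec).intervalIntegrable hgy
  have hprimc : ContinuousOn (primitiveFst a (β * ψ) ⟨·, y⟩) (uIcc a b) :=
    intervalIntegral.continuousOn_primitive_interval' hgy left_mem_uIcc
  simp only [mul_add]
  rw [intervalIntegral.integral_add (by exact ((hslice hec).mul (hslice hqc)).intervalIntegrable)
      (by exact ((hslice hec).mul hprimc).intervalIntegrable),
    intervalIntegral.integral_add (by exact ((hslice hwc).mul (hslice hdqc)).intervalIntegrable)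
      (hgy.continuousOn_mul (hslice hwc))]
  simp only [hwa y hy', hwb y hy', zero_mul, sub_zero, zero_sub] at hparts hprim
  simp only [primitiveFst, Pi.mul_apply]
  linarith

theorem setIntegral_deriv_snd_mul_add_primitiveSnd (hcd : c ≤ d) {w e q dq β ψ : ℝ × ℝ → ℝ}
    {C : ℝ}
    (hw : ∀ p ∈ Icc a b ×ˢ Icc c d, HasDerivWithinAt (fun t => w (p.1, t)) (e p) (Icc c d) p.2)
    (hq : ∀ p ∈ Icc a b ×ˢ Icc c d, HasDerivWithinAt (fun t => q (p.1, t)) (dq p) (Icc c d) p.2)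
    (hwc : ContinuousOn w (Icc a b ×ˢ Icc c d)) (hec : ContinuousOn e (Icc a b ×ˢ Icc c d))
    (hqc : ContinuousOn q (Icc a b ×ˢ Icc c d)) (hdqc : ContinuousOn dq (Icc a b ×ˢ Icc c d))
    (hwc' : ∀ x ∈ Icc a b, w (x, c) = 0) (hwd : ∀ x ∈ Icc a b, w (x, d) = 0)
    (hβ : Measurable β) (hβC : ∀ p, |β p| ≤ C) (hψ : ContinuousOn ψ (Icc a b ×ˢ Icc c d)) :
    ∫ p in Ioo a b ×ˢ Ioo c d, e p * (q p + primitiveSnd c (β * ψ) p) =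
      -∫ p in Ioo a b ×ˢ Ioo c d, w p * (dq p + β p * ψ p) := by
  have hswap : MapsTo Prod.swap (Icc c d ×ˢ Icc a b) (Icc a b ×ˢ Icc c d) :=
    fun p hp => ⟨hp.2, hp.1⟩
  have hswapc : ∀ {F : ℝ × ℝ → ℝ}, ContinuousOn F (Icc a b ×ˢ Icc c d) →
      ContinuousOn (F ∘ Prod.swap) (Icc c d ×ˢ Icc a b) := fun hF =>
    hF.comp continuous_swap.continuousOn hswap
  rw [setIntegral_Ioo_prod_swap, setIntegral_Ioo_prod_swap (F := fun p => w p * (dq p + β p * ψ p))]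
  exact setIntegral_deriv_fst_mul_add_primitiveFst hcd (w := w ∘ Prod.swap) (q := q ∘ Prod.swap)
    (fun p hp => hw p.swap (hswap hp)) (fun p hp => hq p.swap (hswap hp)) (hswapc hwc)
    (hswapc hec) (hswapc hqc) (hswapc hdqc) hwc' hwd (hβ.comp measurable_swap) (fun p => hβC p.swap)
    (hswapc hψ)

theorem setIntegral_grad_mul_add_primitive_eq_zero (hab : a ≤ b) (hcd : c ≤ d)
    {w e₁ e₂ q₁ q₂ dq₁ dq₂ β₁ β₂ ψ : ℝ × ℝ → ℝ} {C₁ C₂ : ℝ}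
    (hw₁ : ∀ p ∈ Icc a b ×ˢ Icc c d, HasDerivWithinAt (fun t => w (t, p.2)) (e₁ p) (Icc a b) p.1)
    (hw₂ : ∀ p ∈ Icc a b ×ˢ Icc c d, HasDerivWithinAt (fun t => w (p.1, t)) (e₂ p) (Icc c d) p.2)
    (he₁c : ContinuousOn e₁ (Icc a b ×ˢ Icc c d)) (he₂c : ContinuousOn e₂ (Icc a b ×ˢ Icc c d))
    (hw : ∀ p ∈ Icc a b ×ˢ Icc c d, (p.1 = a ∨ p.1 = b ∨ p.2 = c ∨ p.2 = d) → w p = 0)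
    (hq₁ : ∀ p ∈ Icc a b ×ˢ Icc c d, HasDerivWithinAt (fun t => q₁ (t, p.2)) (dq₁ p) (Icc a b) p.1)
    (hq₂ : ∀ p ∈ Icc a b ×ˢ Icc c d, HasDerivWithinAt (fun t => q₂ (p.1, t)) (dq₂ p) (Icc c d) p.2)
    (hq₁c : ContinuousOn q₁ (Icc a b ×ˢ Icc c d)) (hq₂c : ContinuousOn q₂ (Icc a b ×ˢ Icc c d))
    (hdq₁c : ContinuousOn dq₁ (Icc a b ×ˢ Icc c d)) (hdq₂c : ContinuousOn dq₂ (Icc a b ×ˢ Icc c d))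
    (hβ₁ : Measurable β₁) (hβ₂ : Measurable β₂) (hβ₁C : ∀ p, |β₁ p| ≤ C₁) (hβ₂C : ∀ p, |β₂ p| ≤ C₂)
    (hβ : ∀ p ∈ Ioo a b ×ˢ Ioo c d, β₁ p + β₂ p = 1) (hψ : ContinuousOn ψ (Icc a b ×ˢ Icc c d))
    (hdiv : ∀ p ∈ Ioo a b ×ˢ Ioo c d, dq₁ p + dq₂ p + ψ p = 0) :
    ∫ p in Ioo a b ×ˢ Ioo c d,
      (e₁ p * (q₁ p + primitiveFst a (β₁ * ψ) p) + e₂ p * (q₂ p + primitiveSnd c (β₂ * ψ) p)) =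
      0 := by
  have hwc := continuousOn_of_hasDerivWithinAt_fst_snd hw₁ hw₂ he₁c he₂c
  have hL₁ : IntegrableOn (fun p => e₁ p * (q₁ p + primitiveFst a (β₁ * ψ) p))
      (Ioo a b ×ˢ Ioo c d) :=
    ((hq₁c.memLp_top_restrict_Ioo_prod.add (memLp_top_primitiveFst_mul hβ₁ hβ₁C hψ)).mul
      he₁c.memLp_top_restrict_Ioo_prod).integrable le_top
  have hL₂ : IntegrableOn (fun p => e₂ p * (q₂ p + primitiveSnd c (β₂ * ψ) p))
      (Ioo a b ×ˢ Ioo c d) :=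
    ((hq₂c.memLp_top_restrict_Ioo_prod.add (memLp_top_primitiveSnd_mul hβ₂ hβ₂C hψ)).mul
      he₂c.memLp_top_restrict_Ioo_prod).integrable le_top
  have hR₁ : IntegrableOn (fun p => w p * (dq₁ p + β₁ p * ψ p)) (Ioo a b ×ˢ Ioo c d) :=
    ((hdq₁c.memLp_top_restrict_Ioo_prod.add (memLp_top_mul_of_continuousOn hβ₁ hβ₁C hψ)).mul
      hwc.memLp_top_restrict_Ioo_prod).integrable le_top
  have hR₂ : IntegrableOn (fun p => w p * (dq₂ p + β₂ p * ψ p)) (Ioo a b ×ˢ Ioo c d) :=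
    ((hdq₂c.memLp_top_restrict_Ioo_prod.add (memLp_top_mul_of_continuousOn hβ₂ hβ₂C hψ)).mul
      hwc.memLp_top_restrict_Ioo_prod).integrable le_top
  rw [integral_add hL₁ hL₂,
    setIntegral_deriv_fst_mul_add_primitiveFst hab hw₁ hq₁ hwc he₁c hq₁c hdq₁c
      (fun y hy => hw (a, y) ⟨left_mem_Icc.2 hab, hy⟩ (by simp))
      (fun y hy => hw (b, y) ⟨right_mem_Icc.2 hab, hy⟩ (by simp)) hβ₁ hβ₁C hψ,
    setIntegral_deriv_snd_mul_add_primitiveSnd hcd hw₂ hq₂ hwc he₂c hq₂c hdq₂c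
      (fun x hx => hw (x, c) ⟨hx, left_mem_Icc.2 hcd⟩ (by simp))
      (fun x hx => hw (x, d) ⟨hx, right_mem_Icc.2 hcd⟩ (by simp)) hβ₂ hβ₂C hψ,
    ← neg_add, ← integral_add hR₁ hR₂, neg_eq_zero]
  refine (setIntegral_congr_fun (measurableSet_Ioo.prod measurableSet_Ioo) fun p hp => ?_).trans
    (integral_zero _ _)
  linear_combination w p * hdiv p hp + w p * ψ p * hβ p hp

theorem sqrt_setIntegral_sq_le_majorant (hab : a ≤ b) (hcd : c ≤ d)
    {w e₁ e₂ a₁ a₂ q₁ q₂ dq₁ dq₂ β₁ β₂ ψ : ℝ × ℝ → ℝ} {C₁ C₂ : ℝ}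
    (hw₁ : ∀ p ∈ Icc a b ×ˢ Icc c d, HasDerivWithinAt (fun t => w (t, p.2)) (e₁ p) (Icc a b) p.1)
    (hw₂ : ∀ p ∈ Icc a b ×ˢ Icc c d, HasDerivWithinAt (fun t => w (p.1, t)) (e₂ p) (Icc c d) p.2)
    (he₁c : ContinuousOn e₁ (Icc a b ×ˢ Icc c d)) (he₂c : ContinuousOn e₂ (Icc a b ×ˢ Icc c d))
    (hw : ∀ p ∈ Icc a b ×ˢ Icc c d, (p.1 = a ∨ p.1 = b ∨ p.2 = c ∨ p.2 = d) → w p = 0)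
    (hq₁ : ∀ p ∈ Icc a b ×ˢ Icc c d, HasDerivWithinAt (fun t => q₁ (t, p.2)) (dq₁ p) (Icc a b) p.1)
    (hq₂ : ∀ p ∈ Icc a b ×ˢ Icc c d, HasDerivWithinAt (fun t => q₂ (p.1, t)) (dq₂ p) (Icc c d) p.2)
    (hq₁c : ContinuousOn q₁ (Icc a b ×ˢ Icc c d)) (hq₂c : ContinuousOn q₂ (Icc a b ×ˢ Icc c d))
    (hdq₁c : ContinuousOn dq₁ (Icc a b ×ˢ Icc c d)) (hdq₂c : ContinuousOn dq₂ (Icc a b ×ˢ Icc c d))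
    (hβ₁ : Measurable β₁) (hβ₂ : Measurable β₂) (hβ₁C : ∀ p, |β₁ p| ≤ C₁) (hβ₂C : ∀ p, |β₂ p| ≤ C₂)
    (hβ : ∀ p ∈ Ioo a b ×ˢ Ioo c d, β₁ p + β₂ p = 1) (hψ : ContinuousOn ψ (Icc a b ×ˢ Icc c d))
    (hdiv : ∀ p ∈ Ioo a b ×ˢ Ioo c d, dq₁ p + dq₂ p + ψ p = 0)
    (he₁ : ∀ p, e₁ p = a₁ p - q₁ p) (he₂ : ∀ p, e₂ p = a₂ p - q₂ p) :
    √(∫ p in Ioo a b ×ˢ Ioo c d, (e₁ p ^ 2 + e₂ p ^ 2)) ≤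
      √(∫ p in Ioo a b ×ˢ Ioo c d, (a₁ p ^ 2 + a₂ p ^ 2)) +
        (√(∫ p in Ioo a b ×ˢ Ioo c d, primitiveFst a (β₁ * ψ) p ^ 2) +
          √(∫ p in Ioo a b ×ˢ Ioo c d, primitiveSnd c (β₂ * ψ) p ^ 2)) := by
  have horth := setIntegral_grad_mul_add_primitive_eq_zero hab hcd hw₁ hw₂ he₁c he₂c hw
    hq₁ hq₂ hq₁c hq₂c hdq₁c hdq₂c hβ₁ hβ₂ hβ₁C hβ₂C hβ hψ hdiv
  have hL2 : ∀ {F : ℝ × ℝ → ℝ}, ContinuousOn F (Icc a b ×ˢ Icc c d) →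
      MemLp F 2 (volume.restrict (Ioo a b ×ˢ Ioo c d)) := fun hF =>
    hF.memLp_top_restrict_Ioo_prod.mono_exponent le_top
  have ha₁c : ContinuousOn a₁ (Icc a b ×ˢ Icc c d) :=
    (he₁c.add hq₁c).congr fun p _ => by rw [Pi.add_apply, he₁, sub_add_cancel]
  have ha₂c : ContinuousOn a₂ (Icc a b ×ˢ Icc c d) :=
    (he₂c.add hq₂c).congr fun p _ => by rw [Pi.add_apply, he₂, sub_add_cancel]
  simpa only [Fin.sum_univ_two, Matrix.cons_val_zero, Matrix.cons_val_one] using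
    sqrt_integral_sum_sq_le_add_of_orthogonal (μ := volume.restrict (Ioo a b ×ˢ Ioo c d))
      (f := ![e₁, e₂]) (a := ![a₁, a₂])
      (r := ![primitiveFst a (β₁ * ψ), primitiveSnd c (β₂ * ψ)])
      (Fin.forall_fin_two.2 ⟨hL2 he₁c, hL2 he₂c⟩) (Fin.forall_fin_two.2 ⟨hL2 ha₁c, hL2 ha₂c⟩)
      (Fin.forall_fin_two.2 ⟨(memLp_top_primitiveFst_mul hβ₁ hβ₁C hψ).mono_exponent le_top,
        (memLp_top_primitiveSnd_mul hβ₂ hβ₂C hψ).mono_exponent le_top⟩) (by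
        rw [← neg_eq_zero, ← integral_neg]
        refine Eq.trans ?_ horth
        congr 1 with p
        simp only [Fin.sum_univ_two, Matrix.cons_val_zero, Matrix.cons_val_one, he₁, he₂]
        ring)

end Rectangle

/-- The majorant (1.6) of Anufriev–Korneev–Kostylev for the homogeneous
Dirichlet problem for Poisson's equation on the unit square: the residual
`f − div z` enters only through its partial antiderivatives `R₁, R₂` weighted
by an arbitrary partition `β₁ + β₂ ≡ 1`. Partial derivatives are supplied as
explicit functions: `u₁, u₂` are the first partials of `u`, `u₁₁, u₂₂` its pure
second partials, `v₁, v₂` the partials of `v`, and `dz₁ = ∂z₁/∂x₁`,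
`dz₂ = ∂z₂/∂x₂`. -/
theorem integrated_residual_majorant_2d_square
    (f u v z₁ z₂ u₁ u₂ u₁₁ u₂₂ v₁ v₂ dz₁ dz₂ β₁ β₂ R₁ R₂ : ℝ × ℝ → ℝ)
    (hf : ContinuousOn f (Icc (0:ℝ) 1 ×ˢ Icc (0:ℝ) 1))
    -- u is twice continuously differentiable on the closed square
    (hu₁ : ∀ p ∈ Icc (0:ℝ) 1 ×ˢ Icc (0:ℝ) 1,
      HasDerivWithinAt (fun t => u (t, p.2)) (u₁ p) (Icc 0 1) p.1)
    (hu₂ : ∀ p ∈ Icc (0:ℝ) 1 ×ˢ Icc (0:ℝ) 1,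
      HasDerivWithinAt (fun t => u (p.1, t)) (u₂ p) (Icc 0 1) p.2)
    (hu₁₁ : ∀ p ∈ Icc (0:ℝ) 1 ×ˢ Icc (0:ℝ) 1,
      HasDerivWithinAt (fun t => u₁ (t, p.2)) (u₁₁ p) (Icc 0 1) p.1)
    (hu₂₂ : ∀ p ∈ Icc (0:ℝ) 1 ×ˢ Icc (0:ℝ) 1,
      HasDerivWithinAt (fun t => u₂ (p.1, t)) (u₂₂ p) (Icc 0 1) p.2)
    (hu₁c : ContinuousOn u₁ (Icc (0:ℝ) 1 ×ˢ Icc (0:ℝ) 1))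
    (hu₂c : ContinuousOn u₂ (Icc (0:ℝ) 1 ×ˢ Icc (0:ℝ) 1))
    (hu₁₁c : ContinuousOn u₁₁ (Icc (0:ℝ) 1 ×ˢ Icc (0:ℝ) 1))
    (hu₂₂c : ContinuousOn u₂₂ (Icc (0:ℝ) 1 ×ˢ Icc (0:ℝ) 1))
    -- −Δu = f in the open square
    (hpde : ∀ p ∈ Ioo (0:ℝ) 1 ×ˢ Ioo (0:ℝ) 1, -(u₁₁ p + u₂₂ p) = f p)
    -- u = 0 on the boundary of the square
    (hubc : ∀ p ∈ Icc (0:ℝ) 1 ×ˢ Icc (0:ℝ) 1,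
      (p.1 = 0 ∨ p.1 = 1 ∨ p.2 = 0 ∨ p.2 = 1) → u p = 0)
    -- v is continuously differentiable and vanishes on the boundary
    (hv₁ : ∀ p ∈ Icc (0:ℝ) 1 ×ˢ Icc (0:ℝ) 1,
      HasDerivWithinAt (fun t => v (t, p.2)) (v₁ p) (Icc 0 1) p.1)
    (hv₂ : ∀ p ∈ Icc (0:ℝ) 1 ×ˢ Icc (0:ℝ) 1,
      HasDerivWithinAt (fun t => v (p.1, t)) (v₂ p) (Icc 0 1) p.2)
    (hv₁c : ContinuousOn v₁ (Icc (0:ℝ) 1 ×ˢ Icc (0:ℝ) 1))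
    (hv₂c : ContinuousOn v₂ (Icc (0:ℝ) 1 ×ˢ Icc (0:ℝ) 1))
    (hvbc : ∀ p ∈ Icc (0:ℝ) 1 ×ˢ Icc (0:ℝ) 1,
      (p.1 = 0 ∨ p.1 = 1 ∨ p.2 = 0 ∨ p.2 = 1) → v p = 0)
    -- z = (z₁, z₂) is a continuously differentiable vector field
    (hz₁c : ContinuousOn z₁ (Icc (0:ℝ) 1 ×ˢ Icc (0:ℝ) 1))
    (hz₂c : ContinuousOn z₂ (Icc (0:ℝ) 1 ×ˢ Icc (0:ℝ) 1))
    (hdz₁ : ∀ p ∈ Icc (0:ℝ) 1 ×ˢ Icc (0:ℝ) 1,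
      HasDerivWithinAt (fun t => z₁ (t, p.2)) (dz₁ p) (Icc 0 1) p.1)
    (hdz₂ : ∀ p ∈ Icc (0:ℝ) 1 ×ˢ Icc (0:ℝ) 1,
      HasDerivWithinAt (fun t => z₂ (p.1, t)) (dz₂ p) (Icc 0 1) p.2)
    (hdz₁c : ContinuousOn dz₁ (Icc (0:ℝ) 1 ×ˢ Icc (0:ℝ) 1))
    (hdz₂c : ContinuousOn dz₂ (Icc (0:ℝ) 1 ×ˢ Icc (0:ℝ) 1))
    -- β₁, β₂ are bounded measurable with β₁ + β₂ ≡ 1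
    (hβ₁m : Measurable β₁) (hβ₂m : Measurable β₂)
    (hβ₁b : ∃ C : ℝ, ∀ p, |β₁ p| ≤ C) (hβ₂b : ∃ C : ℝ, ∀ p, |β₂ p| ≤ C)
    (hβsum : ∀ p, β₁ p + β₂ p = 1)
    -- R₁, R₂ are the partial antiderivatives of the weighted residual
    (hR₁ : ∀ p : ℝ × ℝ, R₁ p =
      ∫ η in (0:ℝ)..p.1, β₁ (η, p.2) * (f (η, p.2) - (dz₁ (η, p.2) + dz₂ (η, p.2))))
    (hR₂ : ∀ p : ℝ × ℝ, R₂ p =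
      ∫ η in (0:ℝ)..p.2, β₂ (p.1, η) * (f (p.1, η) - (dz₁ (p.1, η) + dz₂ (p.1, η)))) :
    Real.sqrt (∫ p in Ioo (0:ℝ) 1 ×ˢ Ioo (0:ℝ) 1,
        ((v₁ p - u₁ p) ^ 2 + (v₂ p - u₂ p) ^ 2)) ≤
      Real.sqrt (∫ p in Ioo (0:ℝ) 1 ×ˢ Ioo (0:ℝ) 1,
          ((v₁ p + z₁ p) ^ 2 + (v₂ p + z₂ p) ^ 2)) +
        (Real.sqrt (∫ p in Ioo (0:ℝ) 1 ×ˢ Ioo (0:ℝ) 1, (R₁ p) ^ 2) +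
          Real.sqrt (∫ p in Ioo (0:ℝ) 1 ×ˢ Ioo (0:ℝ) 1, (R₂ p) ^ 2)) := by
  obtain ⟨C₁, hC₁⟩ := hβ₁b
  obtain ⟨C₂, hC₂⟩ := hβ₂b
  obtain rfl : R₁ = primitiveFst 0 (β₁ * fun p => f p - (dz₁ p + dz₂ p)) := funext hR₁
  obtain rfl : R₂ = primitiveSnd 0 (β₂ * fun p => f p - (dz₁ p + dz₂ p)) := funext hR₂
  exact sqrt_setIntegral_sq_le_majorant zero_le_one zero_le_one (w := fun p => v p - u p)
    (q₁ := fun p => u₁ p + z₁ p) (q₂ := fun p => u₂ p + z₂ p)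
    (fun p hp => (hv₁ p hp).sub (hu₁ p hp)) (fun p hp => (hv₂ p hp).sub (hu₂ p hp))
    (hv₁c.sub hu₁c) (hv₂c.sub hu₂c) (fun p hp h => by rw [hvbc p hp h, hubc p hp h, sub_zero])
    (fun p hp => (hu₁₁ p hp).add (hdz₁ p hp)) (fun p hp => (hu₂₂ p hp).add (hdz₂ p hp))
    (hu₁c.add hz₁c) (hu₂c.add hz₂c) (hu₁₁c.add hdz₁c) (hu₂₂c.add hdz₂c) hβ₁m hβ₂m hC₁ hC₂
    (fun p _ => hβsum p) (hf.sub (hdz₁c.add hdz₂c))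
    (fun p hp => by linear_combination -hpde p hp) (fun p => by ring) (fun p => by ring)
end

section
/- Let E, F, σ, σ* be real numbers with E ≥ 0, F ≥ 0, σ* > 0, 0 ≤ σ ≤ σ*, and σ*·F² ≤ E². Then E² + σ*·F² ≤ (2σ*/(σ* + σ))·(E² + σ·F²). -/
theorem add_mul_le_two_mul_div_add_mul_add_mul {K : Type*} [Field K] [LinearOrder K]
    [IsStrictOrderedRing K] {a b s t : K} (hst : 0 < s + t) (hts : t ≤ s) (hab : s * b ≤ a) :
    a + s * b ≤ 2 * s / (s + t) * (a + t * b) := by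
  have defect : 2 * s * (a + t * b) - (s + t) * (a + s * b) = (s - t) * (a - s * b) := by ring
  have defect_nonneg : 0 ≤ (s - t) * (a - s * b) :=
    mul_nonneg (sub_nonneg.2 hts) (sub_nonneg.2 hab)
  rw [div_mul_eq_mul_div, le_div_iff₀ hst, mul_comm]
  linarith

theorem key_inequality_theorem2_general
    (E F σ σs : ℝ) (hσs : 0 < σs)
    (hσ0 : 0 ≤ σ) (hσ : σ ≤ σs) (hfried : σs * F ^ 2 ≤ E ^ 2) :
    E ^ 2 + σs * F ^ 2 ≤ (2 * σs / (σs + σ)) * (E ^ 2 + σ * F ^ 2) :=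
  add_mul_le_two_mul_div_add_mul_add_mul (add_pos_of_pos_of_nonneg hσs hσ0) hσ hfried

/-- Key real-number inequality in the proof of Theorem 2: under the
Friedrichs-type hypothesis `σ* F² ≤ E²`, the `σ*`-weighted combination is
bounded by `2σ*/(σ*+σ)` times the energy combination. -/
theorem key_inequality_theorem2
    (E F σ σs : ℝ) (hE : 0 ≤ E) (hF : 0 ≤ F) (hσs : 0 < σs)
    (hσ0 : 0 ≤ σ) (hσ : σ ≤ σs) (hfried : σs * F ^ 2 ≤ E ^ 2) :
    E ^ 2 + σs * F ^ 2 ≤ (2 * σs / (σs + σ)) * (E ^ 2 + σ * F ^ 2) :=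
  key_inequality_theorem2_general E F σ σs hσs hσ0 hσ hfried
end

section
/- Let V be a real inner product space, b : V × V → ℝ a symmetric bilinear form with b(w,w) ≥ 0 for all w ∈ V, σ ≥ 0 a real number, S a linear subspace of V, and u ∈ V. Suppose u₀ ∈ S satisfies ⟨u − u₀, χ⟩ = 0 for all χ ∈ S, and u_σ ∈ S satisfies ⟨u − u_σ, χ⟩ + σ·b(u − u_σ, χ) = 0 for all χ ∈ S. Then ‖u − u₀‖ ≤ ‖u − u_σ‖ and b(u − u_σ, u − u_σ) ≤ b(u − u₀, u − u₀). -/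
/-!
Write `e₀ = u - u₀`, `eσ = u - uσ` and `d = uσ - u₀ ∈ S`, so that `e₀ = eσ + d`. Galerkin
orthogonality of `e₀` gives `‖eσ‖² = ‖e₀‖² + ‖d‖²` by Pythagoras, and, tested against `d`, turns
the Galerkin equation for `uσ` into `σ b(eσ, d) = ‖d‖²`. Hence `b(eσ, d) ≥ 0` (if `σ = 0` then
`d = 0`), and `b(e₀, e₀) = b(eσ, eσ) + 2 b(eσ, d) + b(d, d) ≥ b(eσ, eσ)`.
-/

open scoped RealInnerProductSpace

section Galerkin

variable {V : Type*} [NormedAddCommGroup V] [InnerProductSpace ℝ V]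
  {S : Submodule ℝ V} {u u₀ : V}

theorem norm_sub_le_norm_sub_of_inner_eq_zero (hu₀ : u₀ ∈ S) {v : V} (hv : v ∈ S)
    (hgal : ∀ χ ∈ S, ⟪u - u₀, χ⟫ = 0) : ‖u - u₀‖ ≤ ‖u - v‖ := by
  have hpyth : ‖u - v‖ * ‖u - v‖ = ‖u - u₀‖ * ‖u - u₀‖ + ‖v - u₀‖ * ‖v - u₀‖ := by
    rw [← norm_sub_sq_eq_norm_sq_add_norm_sq_real (hgal _ (S.sub_mem hv hu₀)),
      sub_sub_sub_cancel_right]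
  rw [mul_self_le_mul_self_iff (norm_nonneg _) (norm_nonneg _), hpyth]
  exact le_add_of_nonneg_right (mul_self_nonneg _)

theorem inner_sub_sub_eq_neg_norm_sq_of_inner_eq_zero (hu₀ : u₀ ∈ S) {v : V} (hv : v ∈ S)
    (hgal : ∀ χ ∈ S, ⟪u - u₀, χ⟫ = 0) : ⟪u - v, v - u₀⟫ = -‖v - u₀‖ ^ 2 := by
  have hdecomp : u - v = (u - u₀) - (v - u₀) := (sub_sub_sub_cancel_right u v u₀).symm
  rw [hdecomp, inner_sub_left, hgal _ (S.sub_mem hv hu₀), real_inner_self_eq_norm_sq, zero_sub]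

theorem bilin_sub_sub_nonneg_of_galerkin (b : V →ₗ[ℝ] V →ₗ[ℝ] ℝ) {σ : ℝ} (hσ : 0 ≤ σ)
    (hu₀ : u₀ ∈ S) {uσ : V} (huσ : uσ ∈ S) (hgal₀ : ∀ χ ∈ S, ⟪u - u₀, χ⟫ = 0)
    (hgalσ : ∀ χ ∈ S, ⟪u - uσ, χ⟫ + σ * b (u - uσ) χ = 0) :
    0 ≤ b (u - uσ) (uσ - u₀) := by
  have hσb : σ * b (u - uσ) (uσ - u₀) = ‖uσ - u₀‖ ^ 2 := by
    have := hgalσ _ (S.sub_mem huσ hu₀)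
    rw [inner_sub_sub_eq_neg_norm_sq_of_inner_eq_zero hu₀ huσ hgal₀] at this
    linarith
  rcases eq_or_ne uσ u₀ with rfl | hne
  · simp
  · have hd : 0 < ‖uσ - u₀‖ ^ 2 := by positivity [sub_ne_zero.2 hne]
    exact (pos_of_mul_pos_right (hσb ▸ hd) hσ).le

end Galerkin

theorem LinearMap.apply_self_le_apply_add_self {M : Type*} [AddCommGroup M] [Module ℝ M]
    (b : M →ₗ[ℝ] M →ₗ[ℝ] ℝ) (hbsymm : ∀ x y, b x y = b y x) (hbpos : ∀ x, 0 ≤ b x x)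
    {x y : M} (hxy : 0 ≤ b x y) : b x x ≤ b (x + y) (x + y) := by
  have hexpand : b (x + y) (x + y) = b x x + 2 * b x y + b y y := by
    simp only [map_add, LinearMap.add_apply, hbsymm y x]
    ring
  linarith [hbpos y]

/-- Abstract form of the comparison (2.12) between the Galerkin errors for the
reaction–diffusion form `⟨·,·⟩ + σ b` and for the pure diffusion form `⟨·,·⟩`. -/
theorem galerkin_error_comparison
    {V : Type*} [NormedAddCommGroup V] [InnerProductSpace ℝ V]
    (b : V →ₗ[ℝ] V →ₗ[ℝ] ℝ)
    (hbsymm : ∀ w w' : V, b w w' = b w' w)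
    (hbpos : ∀ w : V, 0 ≤ b w w)
    (σ : ℝ) (hσ : 0 ≤ σ)
    (S : Submodule ℝ V) (u u₀ uσ : V)
    (hu₀S : u₀ ∈ S) (huσS : uσ ∈ S)
    (hgal₀ : ∀ χ ∈ S, (inner ℝ (u - u₀) χ : ℝ) = 0)
    (hgalσ : ∀ χ ∈ S, (inner ℝ (u - uσ) χ : ℝ) + σ * b (u - uσ) χ = 0) :
    ‖u - u₀‖ ≤ ‖u - uσ‖ ∧ b (u - uσ) (u - uσ) ≤ b (u - u₀) (u - u₀) := by
  refine ⟨norm_sub_le_norm_sub_of_inner_eq_zero hu₀S huσS hgal₀, ?_⟩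
  have hcross := bilin_sub_sub_nonneg_of_galerkin b hσ hu₀S huσS hgal₀ hgalσ
  simpa only [sub_add_sub_cancel] using b.apply_self_le_apply_add_self hbsymm hbpos hcross
end

section
/- Let V and H be real inner product spaces and T : V → H a real-linear map. Let σ* > 0 and σ be real numbers with 0 ≤ σ ≤ σ*, and let e, g ∈ V and r ∈ H satisfy ‖e‖_V² + σ‖T e‖_H² = ⟨g, e⟩_V + ⟨r, T e⟩_H and σ*‖T e‖_H² ≤ ‖e‖_V². Then (‖e‖_V² + σ‖T e‖_H²)^{1/2} ≤ (2σ*/(σ* + σ))·( ‖g‖_V² + (1/σ*)·‖r‖_H² )^{1/2}. -/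
/-!
Write `E² = ‖e‖² + σ‖Te‖²`. The residual identity and Cauchy–Schwarz give
`E² ≤ ‖g‖‖e‖ + ‖r‖‖Te‖`, and a second, weighted Cauchy–Schwarz bounds this by
`M (‖e‖² + σ*‖Te‖²)^{1/2}` with `M = (‖g‖² + ‖r‖²/σ*)^{1/2}`. The embedding inequality `σ*‖Te‖² ≤ ‖e‖²`
makes the σ*-energy at most `c E²` with `c = 2σ*/(σ* + σ)`, so `E ≤ √c · M`, and `√c ≤ c`
as `c ≥ 1`.
-/

namespace Real

lemma mul_add_mul_sq_le_weighted {s : ℝ} (hs : 0 < s) (x y u v : ℝ) :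
    (x * u + y * v) ^ 2 ≤ (x ^ 2 + 1 / s * y ^ 2) * (u ^ 2 + s * v ^ 2) := by
  have key : s * (x * u + y * v) ^ 2 ≤ (s * x ^ 2 + y ^ 2) * (u ^ 2 + s * v ^ 2) := by
    nlinarith [sq_nonneg (s * x * v - y * u)]
  have hrhs : (s * x ^ 2 + y ^ 2) * (u ^ 2 + s * v ^ 2)
      = s * ((x ^ 2 + 1 / s * y ^ 2) * (u ^ 2 + s * v ^ 2)) := by
    field_simp
  exact le_of_mul_le_mul_left (hrhs ▸ key) hs

lemma mul_add_mul_le_sqrt_mul_sqrt_weighted {s : ℝ} (hs : 0 < s) (x y u v : ℝ) :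
    x * u + y * v ≤ √(x ^ 2 + 1 / s * y ^ 2) * √(u ^ 2 + s * v ^ 2) := by
  have hnonneg : 0 ≤ x ^ 2 + 1 / s * y ^ 2 := by positivity
  rw [← sqrt_mul hnonneg]
  exact le_sqrt_of_sq_le (mul_add_mul_sq_le_weighted hs x y u v)

lemma sqrt_le_of_le_mul_sqrt {x k : ℝ} (hk : 0 ≤ k) (h : x ≤ k * √x) : √x ≤ k := by
  rcases (sqrt_nonneg x).eq_or_lt with hx | hx
  · exact hx ▸ hk
  · refine le_of_mul_le_mul_right ?_ hx
    rwa [mul_self_sqrt (sqrt_pos.1 hx).le]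

end Real

lemma add_mul_le_div_mul_add_mul {σs σ x y : ℝ} (hsum : 0 < σs + σ) (hσ : σ ≤ σs)
    (hxy : σs * y ≤ x) :
    x + σs * y ≤ 2 * σs / (σs + σ) * (x + σ * y) := by
  rw [div_mul_eq_mul_div, le_div_iff₀ hsum]
  nlinarith [mul_nonneg (sub_nonneg.2 hσ) (sub_nonneg.2 hxy)]

/-- Norm (non-squared) form (2.7) of the paper's main majorant, case `σ ≤ σ*`. -/
theorem majorant_norm_form_abstract
    {V H : Type*} [NormedAddCommGroup V] [InnerProductSpace ℝ V]
    [NormedAddCommGroup H] [InnerProductSpace ℝ H]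
    (T : V →ₗ[ℝ] H) (σs σ : ℝ) (hσs : 0 < σs) (hσ0 : 0 ≤ σ) (hσ : σ ≤ σs)
    (e g : V) (r : H)
    (hres : ‖e‖ ^ 2 + σ * ‖T e‖ ^ 2 = (inner ℝ g e : ℝ) + (inner ℝ r (T e) : ℝ))
    (hemb : σs * ‖T e‖ ^ 2 ≤ ‖e‖ ^ 2) :
    Real.sqrt (‖e‖ ^ 2 + σ * ‖T e‖ ^ 2) ≤
      (2 * σs / (σs + σ)) * Real.sqrt (‖g‖ ^ 2 + (1 / σs) * ‖r‖ ^ 2) := by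
  set c := 2 * σs / (σs + σ)
  have hsum : 0 < σs + σ := by linarith
  have hc1 : 1 ≤ c := by rw [le_div_iff₀ hsum]; linarith
  have hc0 : 0 ≤ c := zero_le_one.trans hc1
  have hresidual : ‖e‖ ^ 2 + σ * ‖T e‖ ^ 2 ≤ ‖g‖ * ‖e‖ + ‖r‖ * ‖T e‖ :=
    hres ▸ add_le_add (real_inner_le_norm g e) (real_inner_le_norm r (T e))
  have hcoercive := add_mul_le_div_mul_add_mul hsum hσ hemb
  set E2 := ‖e‖ ^ 2 + σ * ‖T e‖ ^ 2
  set M2 := ‖g‖ ^ 2 + 1 / σs * ‖r‖ ^ 2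
  have hE : √E2 ≤ √c * √M2 := by
    refine Real.sqrt_le_of_le_mul_sqrt (by positivity) ?_
    calc E2 ≤ ‖g‖ * ‖e‖ + ‖r‖ * ‖T e‖ := hresidual
      _ ≤ √M2 * √(‖e‖ ^ 2 + σs * ‖T e‖ ^ 2) :=
        Real.mul_add_mul_le_sqrt_mul_sqrt_weighted hσs _ _ _ _
      _ ≤ √M2 * √(c * E2) := by gcongr
      _ = √c * √M2 * √E2 := by rw [Real.sqrt_mul hc0]; ring
  exact hE.trans <|
    mul_le_mul_of_nonneg_right (Real.sqrt_le_self_iff.2 (Or.inr hc1)) (Real.sqrt_nonneg _)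
end
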